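/- arXiv:1012.2381 — 6 statements merged into one kernel-verified Lean document; each statement's English description precedes it below -/
import Mathlib

section
/- Let Δ be a countably infinite ordered homogeneous Ramsey structure with relational signature and let c₁, …, cₙ be elements of Δ. Then the expansion (Δ, c₁, …, cₙ) is again ordered, homogeneous, and Ramsey. -/
open FirstOrder FirstOrder.Language

namespace PaperDef

/-- The structure `M` is *ordered*: some binary relation symbol of the signature
denotes a linear order on the domain. -/
def Ordered (L : Language) (M : Type*) [L.Structure M] : Prop :=
  ∃ r : L.Relations 2, IsLinearOrder M (fun a b => Structure.RelMap r ![a, b])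

/-- A class of structures is a *Ramsey class*. -/
def RamseyClass {L : Language} (K : Set (CategoryTheory.Bundled.{0} L.Structure)) : Prop :=
  ∀ k : ℕ, 1 ≤ k → ∀ H ∈ K, ∀ P ∈ K, ∃ S ∈ K,
    ∀ χ : {Q : L.Substructure S // Nonempty (P ≃[L] Q)} → Fin k,
      ∃ e : H ↪[L] S,
        ∀ Q₁ Q₂ : {Q : L.Substructure S // Nonempty (P ≃[L] Q)},
          (Q₁.1 : Set S) ⊆ Set.range e → (Q₂.1 : Set S) ⊆ Set.range e → χ Q₁ = χ Q₂

/-- `M` is *finitely bounded*: membership of a finite(ly generated) structure in the age of `M`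
is characterized by finitely many forbidden substructures. -/
def FinitelyBounded (L : Language) (M : Type) [L.Structure M] : Prop :=
  ∃ (k : ℕ) (F : Fin k → CategoryTheory.Bundled.{0} L.Structure),
    (∀ i, Structure.FG L (F i)) ∧
    ∀ A : CategoryTheory.Bundled.{0} L.Structure, Structure.FG L A →
      (A ∈ L.age M ↔ ∀ i, ¬ Nonempty ((F i) ↪[L] A))

/-- The `L'`-structure on `M` is a *reduct* of the `L`-structure on `M`:
every relation of the former is first-order definable in the latter. -/
def IsReduct (L L' : Language) (M : Type*) [L.Structure M] [L'.Structure M] : Prop :=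
  ∀ (n : ℕ) (r : L'.Relations n), ∃ φ : L.Formula (Fin n),
    ∀ x : Fin n → M, Structure.RelMap r x ↔ φ.Realize x

/-- Two `n`-tuples have the same (complete first-order) type. -/
def SameType (L : Language) (M : Type*) [L.Structure M] {n : ℕ} (a b : Fin n → M) : Prop :=
  ∀ φ : L.Formula (Fin n), φ.Realize a ↔ φ.Realize b

/-- A function is *canonical*: it maps tuples of equal types to tuples of equal types. -/
def Canonical (L L' : Language) (X Ω : Type*) [L.Structure X] [L'.Structure Ω]
    (f : X → Ω) : Prop :=
  ∀ (n : ℕ) (a b : Fin n → X), SameType L X a b →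
    SameType L' Ω (fun i => f (a i)) (fun i => f (b i))

/-- A function is *canonical on a set `F`*. -/
def CanonicalOn (L L' : Language) (X Ω : Type*) [L.Structure X] [L'.Structure Ω]
    (F : Set X) (f : X → Ω) : Prop :=
  ∀ (n : ℕ) (a b : Fin n → X), (∀ i, a i ∈ F) → (∀ i, b i ∈ F) → SameType L X a b →
    SameType L' Ω (fun i => f (a i)) (fun i => f (b i))

/-- `M` is ω-categorical: every countable model of its complete theory is isomorphic to it. -/
def OmegaCategorical (L : Language) (M : Type) [L.Structure M] : Prop :=
  ∀ (N : Type) [L.Structure N], Countable N →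
    (∀ φ : L.Sentence, φ ∈ L.completeTheory M → N ⊨ φ) → Nonempty (M ≃[L] N)

/-- Primitive positive formulas: built from atomic formulas using `∧` and `∃`. -/
inductive IsPrimitivePositive {L : Language} {α : Type*} :
    ∀ {n : ℕ}, L.BoundedFormula α n → Prop
  | atomic {n : ℕ} {φ : L.BoundedFormula α n} (h : φ.IsAtomic) : IsPrimitivePositive φ
  | inf {n : ℕ} {φ ψ : L.BoundedFormula α n} :
      IsPrimitivePositive φ → IsPrimitivePositive ψ → IsPrimitivePositive (φ ⊓ ψ)
  | ex {n : ℕ} {φ : L.BoundedFormula α (n + 1)} :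
      IsPrimitivePositive φ → IsPrimitivePositive φ.ex

/-- Existential formulas: existentially quantified quantifier-free formulas. -/
inductive IsExistential {L : Language} {α : Type*} :
    ∀ {n : ℕ}, L.BoundedFormula α n → Prop
  | of_isQF {n : ℕ} {φ : L.BoundedFormula α n} (h : φ.IsQF) : IsExistential φ
  | ex {n : ℕ} {φ : L.BoundedFormula α (n + 1)} : IsExistential φ → IsExistential φ.ex

/-- Existential positive formulas: built from atomic formulas using `∧`, `∨` and `∃`. -/
inductive IsExistentialPositive {L : Language} {α : Type*} :
    ∀ {n : ℕ}, L.BoundedFormula α n → Prop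
  | atomic {n : ℕ} {φ : L.BoundedFormula α n} (h : φ.IsAtomic) : IsExistentialPositive φ
  | inf {n : ℕ} {φ ψ : L.BoundedFormula α n} :
      IsExistentialPositive φ → IsExistentialPositive ψ → IsExistentialPositive (φ ⊓ ψ)
  | sup {n : ℕ} {φ ψ : L.BoundedFormula α n} :
      IsExistentialPositive φ → IsExistentialPositive ψ → IsExistentialPositive (φ ⊔ ψ)
  | ex {n : ℕ} {φ : L.BoundedFormula α (n + 1)} :
      IsExistentialPositive φ → IsExistentialPositive φ.ex

/-- A `k`-ary operation *preserves* an `m`-ary relation. -/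
def Preserves {D : Type*} {k m : ℕ} (f : (Fin k → D) → D) (R : (Fin m → D) → Prop) : Prop :=
  ∀ rows : Fin k → Fin m → D, (∀ j, R (rows j)) → R (fun i => f (fun j => rows j i))

/-- A unary operation *preserves* an `m`-ary relation. -/
def Preserves1 {D : Type*} {m : ℕ} (f : D → D) (R : (Fin m → D) → Prop) : Prop :=
  ∀ a : Fin m → D, R a → R (fun i => f (a i))

/-- An endomorphism of the structure `M`. -/
def IsEndo (L : Language) (M : Type*) [L.Structure M] (f : M → M) : Prop :=
  ∀ (n : ℕ) (r : L.Relations n) (x : Fin n → M),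
    Structure.RelMap r x → Structure.RelMap r (fun i => f (x i))

/-- A self-embedding of the structure `M`. -/
def IsSelfEmb (L : Language) (M : Type*) [L.Structure M] (f : M → M) : Prop :=
  Function.Injective f ∧ ∀ (n : ℕ) (r : L.Relations n) (x : Fin n → M),
    (Structure.RelMap r (fun i => f (x i)) ↔ Structure.RelMap r x)

/-- A polymorphism of the structure `M`. -/
def IsPoly (L : Language) (M : Type*) [L.Structure M] {k : ℕ} (f : (Fin k → M) → M) : Prop :=
  ∀ (n : ℕ) (r : L.Relations n), Preserves f (fun x : Fin n → M => Structure.RelMap r x)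

/-- The set of endomorphisms of `M`. -/
def EndSet (L : Language) (M : Type*) [L.Structure M] : Set (M → M) :=
  {f | IsEndo L M f}

/-- Two tuples lie in the same orbit of the automorphism group. -/
def SameOrbit (L : Language) (M : Type*) [L.Structure M] {n : ℕ} (a b : Fin n → M) : Prop :=
  ∃ α : M ≃[L] M, ∀ i, α (a i) = b i

/-- The subsets `s` and `t` induce isomorphic substructures. -/
def SetIso (L : Language) (X : Type*) [L.Structure X] (s t : Set X) : Prop :=
  ∃ g : s ≃ t, ∀ (n : ℕ) (r : L.Relations n) (x : Fin n → s),
    (Structure.RelMap r (fun j => ((x j : X))) ↔ Structure.RelMap r (fun j => ((g (x j) : t) : X)))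

/-- The `L[[Fin n]]`-structure on `M` obtained by naming the constants `c 0, …, c (n-1)`. -/
def withConstantsStruct (L : Language) {M : Type*} [L.Structure M] {n : ℕ} (c : Fin n → M) :
    (L[[Fin n]]).Structure M :=
  letI := constantsOn.structure c
  inferInstance

/-- Two sequences of `n` tuples from a product `Ξ₁ × ⋯ × Ξₘ` have the same type:
componentwise, the corresponding `n`-tuples have the same type. -/
def SameSeqType {m : ℕ} (Ls : Fin m → Language) (Xs : Fin m → Type*)
    [∀ i, (Ls i).Structure (Xs i)] {n : ℕ} (a b : Fin n → ∀ i, Xs i) : Prop :=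
  ∀ i, SameType (Ls i) (Xs i) (fun j => a j i) (fun j => b j i)

/-- A function defined on a product of structures is canonical. -/
def CanonicalProd {m : ℕ} (Ls : Fin m → Language) (Xs : Fin m → Type*)
    [∀ i, (Ls i).Structure (Xs i)] (L' : Language) (Ω : Type*) [L'.Structure Ω]
    (f : (∀ i, Xs i) → Ω) : Prop :=
  ∀ (n : ℕ) (a b : Fin n → ∀ i, Xs i), SameSeqType Ls Xs a b →
    SameType L' Ω (fun j => f (a j)) (fun j => f (b j))

end PaperDef

/-!
An embedding between finitely generated substructures of `(Δ, c̄)` is an embedding of `Δ` fixing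
`c̄`, and the automorphism of `Δ` extending it still fixes `c̄`; this gives homogeneity.

For the Ramsey property, let `S₀` be a Ramsey witness for the reducts of `H` and `P`, and for each
tuple `q` of `S₀` that some embedding `τ_q : S₀ → Δ` maps onto `c̄` fix one such `τ_q`; `S` is
generated by the finitely many images `τ_q(S₀)`. A copy `Q'` of `P` in `S₀` has a unique
isomorphism from `P`, since finite linear orders are rigid; colour `Q'` by the colour of its image
under `τ_q`, where `q` is the image of the constants of `P` in `Q'`. A monochromatic copy `g(H)` in
`S₀` then gives the monochromatic copy `τ_q(g(H))` in `S`, with `q = g(c̄_H)`.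
-/

namespace FirstOrder.Language

variable {L : Language}

section Reduct

variable {L' : Language} (φ : L →ᴸ L') {M N : Type*} [L.Structure M] [L'.Structure M]
  [φ.IsExpansionOn M] [L.Structure N] [L'.Structure N] [φ.IsExpansionOn N]

def Embedding.reduct (f : M ↪[L'] N) : M ↪[L] N where
  toEmbedding := f.toEmbedding
  map_fun' g x := by simpa only [LHom.map_onFunction] using f.map_fun' (φ.onFunction g) x
  map_rel' r x := by simpa only [LHom.map_onRelation] using f.map_rel' (φ.onRelation r) x

@[simp]
theorem Embedding.reduct_apply (f : M ↪[L'] N) (x : M) : f.reduct φ x = f x :=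
  rfl

end Reduct

section WithConstants

variable {α : Type*} {M N : Type*} [L.Structure M] [L[[α]].Structure M]
  [(L.lhomWithConstants α).IsExpansionOn M] [L.Structure N] [L[[α]].Structure N]
  [(L.lhomWithConstants α).IsExpansionOn N]

def Embedding.toWithConstants (f : M ↪[L] N) (hf : ∀ a : α, f (L.con a) = L.con a) :
    M ↪[L[[α]]] N where
  toEmbedding := f.toEmbedding
  map_fun' {n} g x := by
    rcases g with g | a
    · simpa only [withConstants_funMap_sumInl] using f.map_fun' g x
    · cases n with
      | zero =>
        rw [Subsingleton.elim x default, Subsingleton.elim (f.toFun ∘ default) default]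
        exact hf a
      | succ n => exact isEmptyElim a
  map_rel' r x := by
    rcases r with r | r
    · simpa only [withConstants_relMap_sumInl] using f.map_rel' r x
    · exact isEmptyElim r

def Equiv.toWithConstants (f : M ≃[L] N) (hf : ∀ a : α, f (L.con a) = L.con a) :
    M ≃[L[[α]]] N :=
  { f.toEquiv with
    map_fun' := (f.toEmbedding.toWithConstants hf).map_fun'
    map_rel' := (f.toEmbedding.toWithConstants hf).map_rel' }

theorem Substructure.FG.reduct_withConstants [Finite α] {S : L[[α]].Substructure M} (h : S.FG) :
    ((L.lhomWithConstants α).substructureReduct S).FG := by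
  obtain ⟨s, hs, rfl⟩ := Substructure.fg_def.1 h
  refine Substructure.fg_def.2 ⟨s ∪ Set.range fun a : α => (L.con a : M),
    hs.union (Set.finite_range _), le_antisymm ?_ ?_⟩
  · refine Substructure.closure_le.2 (Set.union_subset Substructure.subset_closure ?_)
    rintro _ ⟨a, rfl⟩
    exact Substructure.constants_mem (S := Substructure.closure L[[α]] s) (L.con a)
  · intro x hx
    refine Substructure.closure_induction hx (fun y hy => Substructure.subset_closure (.inl hy)) ?_
    intro n g y hy
    rcases g with g | a
    · rw [Set.mem_ofPred_eq, withConstants_funMap_sumInl]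
      exact (Substructure.closure L _).fun_mem g y hy
    · cases n with
      | zero =>
        rw [Subsingleton.elim y default]
        exact Substructure.subset_closure (.inr ⟨a, rfl⟩)
      | succ n => exact isEmptyElim a

theorem Structure.FG.reduct_withConstants [Finite α] (h : Structure.FG L[[α]] M) :
    Structure.FG L M :=
  ⟨h.out.reduct_withConstants⟩

end WithConstants

theorem Embedding.map_rel_pair {X M : Type*} [L.Structure X] [L.Structure M] (f : X ↪[L] M)
    (r : L.Relations 2) (a b : X) :
    Structure.RelMap r ![f a, f b] ↔ Structure.RelMap r ![a, b] := by
  rw [← f.map_rel r ![a, b], ← FinVec.map_eq]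
  rfl

theorem Embedding.exists_comp_eq_of_range_subset {P H S : Type*} [L.Structure P] [L.Structure H]
    [L.Structure S] (e : H ↪[L] S) (f : P ↪[L] S) (h : Set.range f ⊆ Set.range e) :
    ∃ u : P ↪[L] H, e.comp u = f :=
  ⟨e.equivRange.symm.toEmbedding.comp
    (f.codRestrict e.toHom.range fun x => Hom.mem_range.2 (h ⟨x, rfl⟩)), by
      ext x
      simp [← e.equivRange_apply]⟩

theorem Substructure.range_subtype_comp {P S : Type*} [L.Structure P] [L.Structure S]
    (Q : L.Substructure S) (j : P ≃[L] Q) : Set.range (Q.subtype.comp j.toEmbedding) = Q := by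
  ext x
  refine ⟨?_, fun hx => ⟨j.symm ⟨x, hx⟩, by simp⟩⟩
  rintro ⟨y, rfl⟩
  simp

theorem IsUltrahomogeneous.exists_equiv_comp_eq {M : Type*} [L.Structure M]
    (hM : L.IsUltrahomogeneous M) {X : Type*} [L.Structure X] (hX : Structure.FG L X)
    (f g : X ↪[L] M) : ∃ γ : M ≃[L] M, ∀ x, γ (g x) = f x := by
  obtain ⟨γ, hγ⟩ := hM g.toHom.range (hX.range g.toHom) (f.comp g.equivRange.symm.toEmbedding)
  refine ⟨γ, fun x => ?_⟩
  simpa using (DFunLike.congr_fun hγ (g.equivRange x)).symm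

end FirstOrder.Language

theorem eq_of_range_eq_of_isLinearOrder {P X : Type*} [Finite P] (R : X → X → Prop)
    [IsLinearOrder X R] {f g : P → X} (hf : f.Injective)
    (hfg : ∀ a b, R (f a) (f b) ↔ R (g a) (g b)) (h : Set.range f = Set.range g) : f = g := by
  classical
  let _ : LinearOrder X :=
    { le := R
      le_refl := refl_of R
      le_trans := fun _ _ _ => trans_of R
      le_antisymm := fun _ _ => antisymm_of R
      le_total := total_of R
      toDecidableLE := inferInstance }
  let _ : LinearOrder P := LinearOrder.lift' f hf
  have hf' : StrictMono f := fun _ _ hab => hab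
  have hg' : StrictMono g := fun a b hab => by
    obtain ⟨hab, hba⟩ := lt_iff_le_not_ge.1 (show f a < f b from hab)
    exact lt_iff_le_not_ge.2 ⟨(hfg a b).1 hab, fun h => hba ((hfg b a).2 h)⟩
  exact (hf'.range_inj hg').1 h

namespace PaperDef

open FirstOrder.Language

section Ordered

variable {L : Language} {X M : Type*} [L.Structure X] [L.Structure M]

theorem Ordered.of_embedding (f : X ↪[L] M) : Ordered L M → Ordered L X := fun ⟨r, _⟩ =>
  ⟨r, (⟨f.toEmbedding, f.map_rel_pair r _ _⟩ : (fun a b : X => Structure.RelMap r ![a, b]) ↪r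
    fun a b : M => Structure.RelMap r ![a, b]).isLinearOrder⟩

theorem Ordered.eq_of_range_eq {P : Type*} [L.Structure P] [Finite P] (hX : Ordered L X)
    {f g : P ↪[L] X} (h : Set.range f = Set.range g) : f = g := by
  obtain ⟨r, _⟩ := hX
  refine DFunLike.coe_injective (eq_of_range_eq_of_isLinearOrder
    (fun a b : X => Structure.RelMap r ![a, b]) f.injective (fun a b => ?_) h)
  rw [f.map_rel_pair, g.map_rel_pair]

end Ordered

section WithConstants

variable {L : Language} {α : Type*} {M : Type*} [L.Structure M] [L[[α]].Structure M]
  [(L.lhomWithConstants α).IsExpansionOn M]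

theorem Ordered.withConstants : Ordered L M → Ordered L[[α]] M := fun ⟨r, hr⟩ =>
  ⟨Sum.inl r, by simpa only [withConstants_relMap_sumInl] using hr⟩

theorem isUltrahomogeneous_withConstants [Finite α] (hM : L.IsUltrahomogeneous M) :
    L[[α]].IsUltrahomogeneous M := by
  intro S hS f
  let _ : L.Structure S := (L.lhomWithConstants α).reduct S
  obtain ⟨γ, hγ⟩ := hM.exists_equiv_comp_eq
    ((S.fg_iff_structure_fg.1 hS).reduct_withConstants) (f.reduct (L.lhomWithConstants α))
    (S.subtype.reduct (L.lhomWithConstants α))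
  have hcon (a : α) : γ (L.con a) = L.con a := by
    simpa only [Embedding.reduct_apply, Embedding.map_constants] using hγ (L.con a)
  exact ⟨γ.toWithConstants hcon, DFunLike.ext _ _ fun x => (hγ x).symm⟩

end WithConstants

section Ramsey

variable {L : Language}

abbrev Copy (L : Language) (P S : Type*) [L.Structure P] [L.Structure S] : Type _ :=
  {Q : L.Substructure S // Nonempty (P ≃[L] Q)}

def Copy.ofEmbedding {P S : Type*} [L.Structure P] [L.Structure S] (f : P ↪[L] S) : Copy L P S :=
  ⟨f.toHom.range, ⟨f.equivRange⟩⟩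

theorem Copy.ofEmbedding_subtype_comp {P S : Type*} [L.Structure P] [L.Structure S]
    (Q : Copy L P S) (j : P ≃[L] Q.1) : Copy.ofEmbedding (Q.1.subtype.comp j.toEmbedding) = Q :=
  Subtype.ext (SetLike.coe_injective ((Hom.range_coe _).trans (Q.1.range_subtype_comp j)))

/-- The partition arrow `S ⟶ (H)^P_k`. -/
def Arrows (L : Language) (k : ℕ) (S H P : Type*) [L.Structure S] [L.Structure H]
    [L.Structure P] : Prop :=
  ∀ χ : Copy L P S → Fin k, ∃ e : H ↪[L] S, ∀ Q₁ Q₂ : Copy L P S,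
    (Q₁.1 : Set S) ⊆ Set.range e → (Q₂.1 : Set S) ⊆ Set.range e → χ Q₁ = χ Q₂

theorem Arrows.of_copy_map {L' : Language} {k : ℕ} {S₀ H₀ P₀ S H P : Type*} [L.Structure S₀]
    [L.Structure H₀] [L.Structure P₀] [L'.Structure S] [L'.Structure H] [L'.Structure P]
    (h : Arrows L k S₀ H₀ P₀) (D : Copy L P₀ S₀ → Copy L' P S)
    (hD : ∀ g : H₀ ↪[L] S₀, ∃ e : H ↪[L'] S, ∀ Q : Copy L' P S, (Q.1 : Set S) ⊆ Set.range e →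
      ∃ Q' : Copy L P₀ S₀, (Q'.1 : Set S₀) ⊆ Set.range g ∧ D Q' = Q) :
    Arrows L' k S H P := by
  intro χ
  obtain ⟨g, hg⟩ := h (χ ∘ D)
  obtain ⟨e, he⟩ := hD g
  refine ⟨e, fun Q₁ Q₂ h₁ h₂ => ?_⟩
  obtain ⟨Q₁', h₁', rfl⟩ := he Q₁ h₁
  obtain ⟨Q₂', h₂', rfl⟩ := he Q₂ h₂
  exact hg Q₁' Q₂' h₁' h₂'

variable {α M : Type*} [L.Structure M] [L[[α]].Structure M]
  [(L.lhomWithConstants α).IsExpansionOn M]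

theorem exists_embedding_map_con {S₀ X : Type*} [L.Structure S₀] [Nonempty (S₀ ↪[L] M)]
    [L.Structure X] [L[[α]].Structure X] [(L.lhomWithConstants α).IsExpansionOn X]
    (hM : L.IsUltrahomogeneous M) (hX : Structure.FG L X) (eX : X ↪[L[[α]]] M) (g : X ↪[L] S₀) :
    ∃ σ : S₀ ↪[L] M, ∀ a : α, σ (g (L.con a)) = L.con a := by
  obtain ⟨σ, hσ⟩ := hM.extend_embedding hX (eX.reduct (L.lhomWithConstants α)) g
  refine ⟨σ, fun a => ?_⟩
  rw [← Embedding.comp_apply, ← hσ, Embedding.reduct_apply, Embedding.map_constants]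

theorem exists_arrows_withConstants [L.IsRelational] [Finite α] (hord : Ordered L M)
    (hM : L.IsUltrahomogeneous M) {k : ℕ} {S₀ H P : Type*} [L.Structure S₀] [Finite S₀]
    [L.Structure H] [L[[α]].Structure H] [(L.lhomWithConstants α).IsExpansionOn H]
    [L.Structure P] [L[[α]].Structure P] [(L.lhomWithConstants α).IsExpansionOn P]
    (hH : Structure.FG L H) (hP : Structure.FG L P) (eH : H ↪[L[[α]]] M) (eP : P ↪[L[[α]]] M)
    (ι : S₀ ↪[L] M) (hS₀ : Arrows L k S₀ H P) :
    ∃ S : L[[α]].Substructure M, S.FG ∧ Arrows L[[α]] k S H P := by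
  have : Nonempty (S₀ ↪[L] M) := ⟨ι⟩
  have : Finite P := hP.finite
  -- `τ q` sends `q` to the constants whenever some embedding does
  let τ (q : α → S₀) : S₀ ↪[L] M :=
    Classical.epsilon fun σ : S₀ ↪[L] M => ∀ a, σ (q a) = L.con a
  have hτH (g : H ↪[L] S₀) : ∀ a : α, τ (fun b => g (L.con b)) (g (L.con a)) = L.con a :=
    Classical.epsilon_spec (exists_embedding_map_con hM hH eH g)
  have hτP (g : P ↪[L] S₀) : ∀ a : α, τ (fun b => g (L.con b)) (g (L.con a)) = L.con a :=
    Classical.epsilon_spec (exists_embedding_map_con hM hP eP g)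
  let S := Substructure.closure L[[α]] (⋃ q, Set.range (τ q))
  have hτS (q : α → S₀) (s : S₀) : τ q s ∈ S :=
    Substructure.subset_closure (Set.mem_iUnion.2 ⟨q, s, rfl⟩)
  let liftH (g : H ↪[L] S₀) : H ↪[L[[α]]] S :=
    (((τ _).comp g).toWithConstants (hτH g)).codRestrict S fun _ => hτS _ _
  let liftP (g : P ↪[L] S₀) : P ↪[L[[α]]] S :=
    (((τ _).comp g).toWithConstants (hτP g)).codRestrict S fun _ => hτS _ _
  refine ⟨S, Substructure.fg_closure (Set.finite_iUnion fun _ => Set.finite_range _),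
    hS₀.of_copy_map (fun Q' => Copy.ofEmbedding (liftP (Q'.1.subtype.comp Q'.2.some.toEmbedding)))
    fun g => ⟨liftH g, fun Q hQ => ?_⟩⟩
  obtain ⟨em⟩ := Q.2
  obtain ⟨u, hu⟩ := (liftH g).exists_comp_eq_of_range_subset (Q.1.subtype.comp em.toEmbedding)
    ((Q.1.range_subtype_comp em).trans_subset hQ)
  let u₀ := u.reduct (L.lhomWithConstants α)
  let Q' := Copy.ofEmbedding (g.comp u₀)
  have hQ' : Q'.1.subtype.comp Q'.2.some.toEmbedding = g.comp u₀ :=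
    (hord.of_embedding ι).eq_of_range_eq ((Q'.1.range_subtype_comp _).trans (Hom.range_coe _))
  refine ⟨Q', by rintro _ ⟨x, rfl⟩; exact ⟨u x, rfl⟩, ?_⟩
  have hlift : liftP (g.comp u₀) = (liftH g).comp u := by
    ext x
    change τ (fun b => g (u (L.con b))) (g (u x)) = τ (fun b => g (L.con b)) (g (u x))
    simp only [Embedding.map_constants]
  rw [hQ', hlift, hu, Copy.ofEmbedding_subtype_comp]

end Ramsey

theorem ramseyClass_age_withConstants {L : Language} [L.IsRelational] {α : Type*} [Finite α]
    {M : Type} [L.Structure M] [L[[α]].Structure M] [(L.lhomWithConstants α).IsExpansionOn M]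
    (hord : Ordered L M) (hM : L.IsUltrahomogeneous M) (hram : RamseyClass (L.age M)) :
    RamseyClass (L[[α]].age M) := by
  intro k hk H ⟨hHfg, ⟨eH⟩⟩ P ⟨hPfg, ⟨eP⟩⟩
  let _ : L.Structure H := (L.lhomWithConstants α).reduct H
  let _ : L.Structure P := (L.lhomWithConstants α).reduct P
  have hH : Structure.FG L H := hHfg.reduct_withConstants
  have hP : Structure.FG L P := hPfg.reduct_withConstants
  obtain ⟨S₀, ⟨hS₀, ⟨ι⟩⟩, hS₀HP⟩ := hram k hk (.of H) ⟨hH, ⟨eH.reduct (L.lhomWithConstants α)⟩⟩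
    (.of P) ⟨hP, ⟨eP.reduct (L.lhomWithConstants α)⟩⟩
  have : Finite S₀ := hS₀.finite
  obtain ⟨S, hS, hSHP⟩ := exists_arrows_withConstants hord hM hH hP eH eP ι hS₀HP
  exact ⟨.of S, ⟨S.fg_iff_structure_fg.1 hS, ⟨S.subtype⟩⟩, hSHP⟩

theorem expansion_by_constants_is_ordered_homogeneous_Ramsey_general
    (L : Language) (M : Type) [L.Structure M]
    (hrel : ∀ i, IsEmpty (L.Functions i))
    (hord : Ordered L M) (hhom : L.IsUltrahomogeneous M) (hram : RamseyClass (L.age M))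
    (n : ℕ) (c : Fin n → M) :
    @Ordered (L[[Fin n]]) M (withConstantsStruct L c) ∧
      @Language.IsUltrahomogeneous (L[[Fin n]]) M (withConstantsStruct L c) ∧
      RamseyClass (@Language.age (L[[Fin n]]) M (withConstantsStruct L c)) := by
  let _ := withConstantsStruct L c
  have : L.IsRelational := hrel
  have : (L.lhomWithConstants (Fin n)).IsExpansionOn M := ⟨fun _ _ => rfl, fun _ _ => rfl⟩
  exact ⟨hord.withConstants, isUltrahomogeneous_withConstants hhom,
    ramseyClass_age_withConstants hord hhom hram⟩

/-- **Proposition 6 of the paper.**  Let `Δ` (an `L`-structure on `M`) be a countably infinite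
ordered homogeneous Ramsey structure with relational signature and let `c₁, …, cₙ` be elements
of `Δ`.  Then the expansion `(Δ, c₁, …, cₙ)` by constants is again ordered, homogeneous
and Ramsey. -/
theorem expansion_by_constants_is_ordered_homogeneous_Ramsey
    (L : Language) (M : Type) [L.Structure M] [Countable M] [Infinite M]
    (hrel : ∀ i, IsEmpty (L.Functions i))
    (hord : Ordered L M) (hhom : L.IsUltrahomogeneous M) (hram : RamseyClass (L.age M))
    (n : ℕ) (c : Fin n → M) :
    @Ordered (L[[Fin n]]) M (withConstantsStruct L c) ∧
      @Language.IsUltrahomogeneous (L[[Fin n]]) M (withConstantsStruct L c) ∧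
      RamseyClass (@Language.age (L[[Fin n]]) M (withConstantsStruct L c)) :=
  expansion_by_constants_is_ordered_homogeneous_Ramsey_general L M hrel hord hhom hram n c

end PaperDef
end

section
/- Let Θ be a structure with finite relational signature that is a reduct of a countably infinite ordered homogeneous Ramsey structure Δ with finite relational signature, and let N be a closed transformation monoid that is minimal above End(Θ). Then there exist elements c₁, …, c_{n(Θ)} of Δ, where n(Θ) is the maximal arity of the relations of Θ, and a function f from the domain to itself that is canonical as a function from (Δ, c₁, …, c_{n(Θ)}) to Δ, such that N is the smallest closed transformation monoid containing End(Θ) together with f. -/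
open FirstOrder FirstOrder.Language

namespace PaperDef

section Monoids

variable {D : Type*}

/-- A closed transformation monoid: contains the identity, is closed under composition,
and is topologically closed in the topology of pointwise convergence (`D` discrete). -/
def IsClosedTransMonoid (S : Set (D → D)) : Prop :=
  id ∈ S ∧ (∀ g h, g ∈ S → h ∈ S → g ∘ h ∈ S) ∧
    ∀ g : D → D, (∀ F : Set D, F.Finite → ∃ h ∈ S, ∀ x ∈ F, h x = g x) → g ∈ S

/-- The smallest closed transformation monoid containing a given set of unary operations. -/
def ClosedMonoidGenBy (A : Set (D → D)) : Set (D → D) :=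
  ⋂₀ {S : Set (D → D) | IsClosedTransMonoid S ∧ A ⊆ S}

/-- `N` is a minimal closed transformation monoid above `M₀`. -/
def MinimalMonoidAbove (M₀ N : Set (D → D)) : Prop :=
  M₀ ⊂ N ∧ ∀ R : Set (D → D), IsClosedTransMonoid R → M₀ ⊂ R → R ⊆ N → R = N

end Monoids

/-- Terms (compositions) over the generating set consisting of `f` and the automorphisms. -/
inductive MonoidTerm (L : Language) (M : Type*) [L.Structure M] (f : M → M) : (M → M) → Prop
  | id : MonoidTerm L M f id
  | base : MonoidTerm L M f f
  | auto (α : M ≃[L] M) : MonoidTerm L M f α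
  | comp {g h : M → M} : MonoidTerm L M f g → MonoidTerm L M f h → MonoidTerm L M f (g ∘ h)

/-- `f` generates `g` over the structure `M`: `g` lies in the smallest closed transformation
monoid containing `f` and all automorphisms of `M`; equivalently, on every finite set `g`
agrees with some composition of `f` and automorphisms. -/
def GeneratesOverMonoid (L : Language) (M : Type*) [L.Structure M] (f g : M → M) : Prop :=
  ∀ F : Set M, F.Finite → ∃ h : M → M, MonoidTerm L M f h ∧ ∀ x ∈ F, h x = g x

section Clones

variable {D : Type*}

/-- A closed clone: a family of sets of finitary operations containing all projections,
closed under composition, and with every arity-part topologically closed in the topology of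
pointwise convergence (`D` discrete). -/
def IsClosedClone (C : ∀ k : ℕ, Set ((Fin k → D) → D)) : Prop :=
  (∀ (k : ℕ) (i : Fin k), (fun x => x i) ∈ C k) ∧
  (∀ (k l : ℕ) (f : (Fin l → D) → D) (gs : Fin l → (Fin k → D) → D),
      f ∈ C l → (∀ j, gs j ∈ C k) → (fun x => f (fun j => gs j x)) ∈ C k) ∧
  (∀ (k : ℕ) (g : (Fin k → D) → D),
      (∀ F : Set (Fin k → D), F.Finite → ∃ h ∈ C k, ∀ x ∈ F, h x = g x) → g ∈ C k)

/-- Containment of clones. -/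
def CloneLE (C C' : ∀ k : ℕ, Set ((Fin k → D) → D)) : Prop :=
  ∀ k, C k ⊆ C' k

/-- Proper containment of clones. -/
def CloneLT (C C' : ∀ k : ℕ, Set ((Fin k → D) → D)) : Prop :=
  CloneLE C C' ∧ C ≠ C'

/-- `N` is a minimal closed clone above `C₀`. -/
def MinimalCloneAbove (C₀ N : ∀ k : ℕ, Set ((Fin k → D) → D)) : Prop :=
  CloneLT C₀ N ∧ ∀ E : ∀ k : ℕ, Set ((Fin k → D) → D),
    IsClosedClone E → CloneLT C₀ E → CloneLE E N → E = N

/-- The smallest closed clone containing a set `S` of unary operations. -/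
def CloneGenByUnary (S : Set (D → D)) : ∀ k : ℕ, Set ((Fin k → D) → D) :=
  fun k => {g | ∀ C : ∀ j : ℕ, Set ((Fin j → D) → D), IsClosedClone C →
    (∀ e ∈ S, (fun x : Fin 1 → D => e (x 0)) ∈ C 1) → g ∈ C k}

/-- The smallest closed clone containing a set `S` of unary operations together with a
single operation `f` of arity `p`. -/
def CloneGenByUnaryAnd (S : Set (D → D)) {p : ℕ} (f : (Fin p → D) → D) :
    ∀ k : ℕ, Set ((Fin k → D) → D) :=
  fun k => {g | ∀ C : ∀ j : ℕ, Set ((Fin j → D) → D), IsClosedClone C →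
    (∀ e ∈ S, (fun x : Fin 1 → D => e (x 0)) ∈ C 1) → f ∈ C p → g ∈ C k}

end Clones

/-- The polymorphism clone of the structure `M`. -/
def PolSet (L : Language) (M : Type*) [L.Structure M] : ∀ k : ℕ, Set ((Fin k → M) → M) :=
  fun _ => {f | IsPoly L M f}

/-- Clone terms over the generating set consisting of `f` and the automorphisms of `M`. -/
inductive CloneTerm (L : Language) (M : Type*) [L.Structure M] {m : ℕ}
    (f : (Fin m → M) → M) : ∀ {k : ℕ}, ((Fin k → M) → M) → Prop
  | proj {k : ℕ} (i : Fin k) : CloneTerm L M f (fun x => x i)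
  | autoComp {k : ℕ} (α : M ≃[L] M) {g : (Fin k → M) → M} :
      CloneTerm L M f g → CloneTerm L M f (fun x => α (g x))
  | baseComp {k : ℕ} (gs : Fin m → (Fin k → M) → M) :
      (∀ j, CloneTerm L M f (gs j)) → CloneTerm L M f (fun x => f (fun j => gs j x))

/-- `f` generates the `k`-ary operation `g` over the structure `M`: `g` lies in the smallest
closed clone containing `f` and all automorphisms of `M`; equivalently, on every finite set
`g` agrees with some term over `f`, the automorphisms and projections. -/
def GeneratesOverClone (L : Language) (M : Type*) [L.Structure M] {m k : ℕ}
    (f : (Fin m → M) → M) (g : (Fin k → M) → M) : Prop :=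
  ∀ F : Set (Fin k → M), F.Finite → ∃ h : (Fin k → M) → M,
    CloneTerm L M f h ∧ ∀ x ∈ F, h x = g x

end PaperDef

/-!
Pick `g ∈ N` that is not an endomorphism of `Θ`, witnessed by a tuple `x` of length at most
`n(Θ)` and a relation of `Θ` that `g` does not preserve on `x`; let `c` list the entries of `x`.
Since `Δ` is homogeneous, types of tuples are atomic types, of which there are finitely many
in each length. Colouring the copies of a finite substructure by the atomic type of their image
under `g` (the copies are rigid because `Δ` is ordered), the Ramsey property yields, for every
finite `A`, an automorphism `β` fixing `c` such that `g ∘ β` is canonical over `c` on `A` up to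
the maximal arity of `Δ`. A compactness argument along the finite subsets of the countable
domain glues these into one `f` which is locally of the form `γ ∘ g ∘ β` with automorphisms
`γ, β` and agrees with `g` on `c`. Hence `f` is canonical from `(Δ, c)` to `Δ`; it lies in `N`
because automorphisms of `Δ` are endomorphisms of its reduct `Θ`, and it is not an
endomorphism of `Θ` because it violates the same relation on `x`. Minimality of `N` forces
`N` to be generated by `End(Θ)` and `f`.
-/

namespace PaperDef

section AtomicType

variable {L : Language}

/-- Atomic types of `ι`-tuples, encoded by the equalities and the relations holding among the
entries. In a homogeneous relational structure they determine orbits, and so stand in for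
complete types; for finite `ι` and a finite signature there are finitely many. -/
abbrev AtomicType (L : Language) (ι : Type*) : Type _ :=
  (ι → ι → Prop) × ((p : Σ n, L.Relations n) → (Fin p.1 → ι) → Prop)

def atomicType (L : Language) {α ι : Type*} [L.Structure α] (u : ι → α) : AtomicType L ι :=
  (fun i j => u i = u j, fun p σ => Structure.RelMap p.2 (u ∘ σ))

variable {α β ι : Type*} [L.Structure α] [L.Structure β]

theorem atomicType_eq_iff {u : ι → α} {v : ι → β} :
    atomicType L u = atomicType L v ↔ (∀ i j, u i = u j ↔ v i = v j) ∧
      ∀ (p : Σ n, L.Relations n) (σ : Fin p.1 → ι),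
        Structure.RelMap p.2 (u ∘ σ) ↔ Structure.RelMap p.2 (v ∘ σ) := by
  simp only [atomicType, Prod.mk.injEq, funext_iff, eq_iff_iff]

theorem atomicType_comp {u : ι → α} {v : ι → β} (h : atomicType L u = atomicType L v)
    {ι' : Type*} (σ : ι' → ι) : atomicType L (u ∘ σ) = atomicType L (v ∘ σ) := by
  rw [atomicType_eq_iff] at h ⊢
  exact ⟨fun i j => h.1 (σ i) (σ j), fun p τ => h.2 p (σ ∘ τ)⟩

@[simp]
theorem atomicType_embedding_comp (e : α ↪[L] β) (u : ι → α) :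
    atomicType L (e ∘ u) = atomicType L u :=
  atomicType_eq_iff.2 ⟨fun _ _ => e.injective.eq_iff, fun p σ => e.map_rel p.2 (u ∘ σ)⟩

@[simp]
theorem atomicType_equiv_comp (e : α ≃[L] β) (u : ι → α) :
    atomicType L (e ∘ u) = atomicType L u :=
  atomicType_embedding_comp e.toEmbedding u

theorem atomicType_eq_of_forall_comp {D : ℕ} (hD : 2 ≤ D)
    (harity : ∀ n, Nonempty (L.Relations n) → n ≤ D) {u : ι → α} {v : ι → β}
    (h : ∀ d ≤ D, ∀ σ : Fin d → ι, atomicType L (u ∘ σ) = atomicType L (v ∘ σ)) :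
    atomicType L u = atomicType L v := by
  refine atomicType_eq_iff.2 ⟨fun i j => ?_, fun p σ => ?_⟩
  · simpa [atomicType_eq_iff] using (atomicType_eq_iff.1 (h 2 hD ![i, j])).1 0 1
  · exact (atomicType_eq_iff.1 (h p.1 (harity p.1 ⟨p.2⟩) σ)).2 p id

theorem exists_arity_bound [Finite (Σ n, L.Relations n)] :
    ∃ D, ∀ n, Nonempty (L.Relations n) → n ≤ D := by
  obtain ⟨D, hD⟩ := (Set.finite_range (Sigma.fst : (Σ n, L.Relations n) → ℕ)).bddAbove
  exact ⟨D, fun n ⟨r⟩ => hD ⟨⟨n, r⟩, rfl⟩⟩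

end AtomicType

section Relational

open Substructure

variable {L : Language} {α β ι : Type*} [L.Structure α] [L.Structure β]

def enumClosure (u : ι → α) (i : ι) : closure L (Set.range u) :=
  ⟨u i, subset_closure ⟨i, rfl⟩⟩

@[simp]
theorem atomicType_enumClosure (u : ι → α) :
    atomicType L (enumClosure (L := L) u) = atomicType L u :=
  (atomicType_embedding_comp (closure L (Set.range u)).subtype (enumClosure u)).symm

variable [L.IsRelational]

theorem exists_equiv_of_atomicType_eq {a : ι → α} {b : ι → β} (ha : a.Surjective)
    (hb : b.Surjective) (h : atomicType L a = atomicType L b) :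
    ∃ φ : α ≃[L] β, ∀ i, φ (a i) = b i := by
  obtain ⟨heq, hrel⟩ := atomicType_eq_iff.1 h
  set F : α → β := fun x => b (Function.surjInv ha x)
  have hFa : ∀ i, F (a i) = b i := fun i => (heq _ i).1 (Function.surjInv_eq ha (a i))
  have hF : F.Bijective := by
    refine ⟨fun x y hxy => ?_, fun y => ?_⟩
    · obtain ⟨i, rfl⟩ := ha x
      obtain ⟨j, rfl⟩ := ha y
      rw [hFa, hFa] at hxy
      exact (heq i j).2 hxy
    · obtain ⟨i, rfl⟩ := hb y
      exact ⟨a i, hFa i⟩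
  refine ⟨⟨Equiv.ofBijective F hF, fun f => isEmptyElim f, fun {n} r x => ?_⟩, hFa⟩
  obtain ⟨σ, rfl⟩ : ∃ σ : Fin n → ι, a ∘ σ = x := ⟨Function.surjInv ha ∘ x,
    funext fun l => Function.surjInv_eq ha (x l)⟩
  have hFσ : F ∘ (a ∘ σ) = b ∘ σ := funext fun l => hFa (σ l)
  exact hFσ ▸ (hrel ⟨n, r⟩ σ).symm

theorem enumClosure_surjective (u : ι → α) : (enumClosure (L := L) u).Surjective := by
  rintro ⟨x, hx⟩
  obtain ⟨i, rfl⟩ := (mem_closure_iff_of_isRelational L _ x).1 hx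
  exact ⟨i, rfl⟩

theorem exists_equiv_enumClosure {u : ι → α} {v : ι → β}
    (h : atomicType L u = atomicType L v) :
    ∃ φ : closure L (Set.range u) ≃[L] closure L (Set.range v),
      ∀ i, φ (enumClosure u i) = enumClosure v i :=
  exists_equiv_of_atomicType_eq (enumClosure_surjective u) (enumClosure_surjective v)
    (by simpa using h)

variable {M : Type*} [L.Structure M]

theorem exists_equiv_apply_eq_of_atomicType_eq (hhom : L.IsUltrahomogeneous M) [Finite ι]
    {u v : ι → M} (h : atomicType L u = atomicType L v) :
    ∃ γ : M ≃[L] M, ∀ i, γ (u i) = v i := by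
  obtain ⟨φ, hφ⟩ := exists_equiv_enumClosure h
  obtain ⟨γ, hγ⟩ := hhom _ (fg_closure (Set.finite_range u))
    ((closure L (Set.range v)).subtype.comp φ.toEmbedding)
  refine ⟨γ, fun i => ?_⟩
  have := DFunLike.congr_fun hγ (enumClosure u i)
  exact this.symm.trans (congrArg Subtype.val (hφ i))

theorem exists_forall_equiv_apply_eq_of_atomicType_eq (hhom : L.IsUltrahomogeneous M)
    [Finite ι] (u : ι → M) : ∃ sel : (ι → M) → M ≃[L] M,
      ∀ v, atomicType L v = atomicType L u → ∀ i, sel v (v i) = u i := by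
  classical
  refine ⟨fun v => if h : atomicType L v = atomicType L u then
    (exists_equiv_apply_eq_of_atomicType_eq hhom h).choose else Language.Equiv.refl L M,
    fun v h => ?_⟩
  simpa only [dif_pos h] using (exists_equiv_apply_eq_of_atomicType_eq hhom h).choose_spec

theorem sameType_of_atomicType_eq (hhom : L.IsUltrahomogeneous M) {n : ℕ} {u v : Fin n → M}
    (h : atomicType L u = atomicType L v) : SameType L M u v := by
  obtain ⟨γ, hγ⟩ := exists_equiv_apply_eq_of_atomicType_eq hhom h
  intro φ
  rw [show v = γ ∘ u from funext fun i => (hγ i).symm]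
  exact (StrongHomClass.realize_formula γ φ).symm

end Relational

section Rigidity

variable {L : Language} {α β : Type*} [L.Structure α] [L.Structure β] {r₀ : L.Relations 2}

theorem relMap_pair_embedding (e : α ↪[L] β) (a b : α) :
    Structure.RelMap r₀ ![e a, e b] ↔ Structure.RelMap r₀ ![a, b] := by
  have : ![e a, e b] = e ∘ ![a, b] := by
    ext i
    fin_cases i <;> rfl
  rw [this]
  exact e.map_rel r₀ _

theorem isLinearOrder_of_embedding (e : α ↪[L] β)
    (h : IsLinearOrder β fun a b => Structure.RelMap r₀ ![a, b]) :
    IsLinearOrder α fun a b => Structure.RelMap r₀ ![a, b] :=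
  haveI := h
  RelEmbedding.isLinearOrder (s := fun a b => Structure.RelMap r₀ ![a, b])
    ⟨e.toEmbedding, relMap_pair_embedding e _ _⟩

theorem subsingleton_equiv_of_isLinearOrder [Finite α]
    (h : IsLinearOrder α fun a b => Structure.RelMap r₀ ![a, b]) : Subsingleton (α ≃[L] β) := by
  let lt : α → α → Prop := fun a b => Structure.RelMap r₀ ![a, b] ∧ a ≠ b
  have : IsTrans α lt := ⟨fun a b c ⟨hab, hab'⟩ ⟨hbc, _⟩ =>
    ⟨h.trans _ _ _ hab hbc, fun hac => hab' (h.antisymm _ _ hab (hac ▸ hbc))⟩⟩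
  have : Std.Irrefl lt := ⟨fun _ ha => ha.2 rfl⟩
  have : IsWellOrder α lt :=
    { wf := Finite.wellFounded_of_trans_of_irrefl lt
      trichotomous := fun a b hab hba => by
        by_contra hne
        rcases h.total a b with h' | h'
        exacts [hab ⟨h', hne⟩, hba ⟨h', Ne.symm hne⟩] }
  refine ⟨fun φ ψ => ?_⟩
  let θ := ψ.symm.comp φ
  let θr : lt ≃r lt := ⟨θ.toEquiv, fun {a b} =>
    and_congr (relMap_pair_embedding θ.toEmbedding a b) θ.injective.ne_iff⟩
  ext a
  -- the only automorphism of the finite well-order `lt` is the identity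
  have hθ : ψ.symm (φ a) = a := InitialSeg.eq_relIso (InitialSeg.refl lt) θr a
  exact ψ.symm.injective (hθ.trans (ψ.symm_apply_apply a).symm)

end Rigidity

section Ramsey

open Substructure

variable {L : Language} {M : Type} [L.Structure M]

def IsMonochromaticOn {ι κ : Type*} (χ : (ι → M) → κ) (δ : AtomicType L ι) (T : Set M) :
    Prop :=
  ∀ W₁ W₂ : ι → M, Set.range W₁ ⊆ T → Set.range W₂ ⊆ T →
    atomicType L W₁ = δ → atomicType L W₂ = δ → χ W₁ = χ W₂

theorem IsMonochromaticOn.mono {ι κ : Type*} {χ : (ι → M) → κ} {δ : AtomicType L ι}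
    {T T' : Set M} (h : IsMonochromaticOn χ δ T) (hT : T' ⊆ T) : IsMonochromaticOn χ δ T' :=
  fun W₁ W₂ h₁ h₂ => h W₁ W₂ (h₁.trans hT) (h₂.trans hT)

variable [L.IsRelational] {r₀ : L.Relations 2}

theorem equiv_apply_enumClosure (hlin : IsLinearOrder M fun a b => Structure.RelMap r₀ ![a, b])
    {ι S : Type*} [Finite ι] [L.Structure S] {u : ι → M} {v : ι → S}
    (h : atomicType L u = atomicType L v)
    (φ : closure L (Set.range u) ≃[L] closure L (Set.range v)) (i : ι) :
    φ (enumClosure u i) = enumClosure v i := by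
  have : Finite (closure L (Set.range u)) := (fg_closure (Set.finite_range u)).finite
  obtain ⟨φ', hφ'⟩ := exists_equiv_enumClosure h
  rw [(subsingleton_equiv_of_isLinearOrder
    (isLinearOrder_of_embedding (closure L (Set.range u)).subtype hlin)).elim φ φ', hφ']

theorem exists_fg_forall_embedding_isMonochromaticOn
    (hlin : IsLinearOrder M fun a b => Structure.RelMap r₀ ![a, b])
    (hram : RamseyClass (L.age M)) {ι κ : Type*} [Finite ι] [Finite κ]
    (χ : (ι → M) → κ) (δ : AtomicType L ι) {A : L.Substructure M} (hA : A.FG) :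
    ∃ B : L.Substructure M, B.FG ∧ ∀ θ' : B ↪[L] M, ∃ θ : A ↪[L] M,
      Set.range θ ⊆ Set.range θ' ∧ IsMonochromaticOn χ δ (Set.range θ) := by
  by_cases hδ : ∃ W₀ : ι → M, atomicType L W₀ = δ
  swap
  · exact ⟨A, hA, fun θ' => ⟨θ', subset_rfl, fun W₁ _ _ _ h₁ => absurd ⟨W₁, h₁⟩ hδ⟩⟩
  obtain ⟨W₀, rfl⟩ := hδ
  set P := closure L (Set.range W₀)
  have : Nonempty κ := ⟨χ W₀⟩
  have := Fintype.ofFinite κ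
  obtain ⟨S, hS, hRam⟩ := hram (Fintype.card κ) Fintype.card_pos _ (age.fg_substructure hA) _
    (age.fg_substructure (fg_closure (Set.finite_range W₀)))
  obtain ⟨ψ₀⟩ := hS.2
  have : Finite S := hS.1.finite
  refine ⟨ψ₀.toHom.range, fg_iff_finite.2 (Finite.of_equiv _ ψ₀.equivRange.toEquiv),
    fun θ' => ?_⟩
  let em : S ↪[L] M := θ'.comp ψ₀.equivRange.toEmbedding
  -- a copy of `P` is coloured by `χ` of its enumeration along the (unique, by rigidity)
  -- isomorphism from `P`
  let colour : {Q : L.Substructure S // Nonempty (P ≃[L] Q)} → Fin (Fintype.card κ) :=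
    fun Q => Fintype.equivFin κ (χ (em ∘ Q.1.subtype ∘ Q.2.some ∘ enumClosure W₀))
  obtain ⟨e, he⟩ := hRam colour
  have key : ∀ W : ι → M, Set.range W ⊆ Set.range (em.comp e) →
      atomicType L W = atomicType L W₀ →
      ∃ Q, (Q.1 : Set S) ⊆ Set.range e ∧ colour Q = Fintype.equivFin κ (χ W) := by
    intro W hW hδ
    choose z hz using fun i => hW ⟨i, rfl⟩
    let v := e ∘ z
    have hv : em ∘ v = W := funext hz
    have hvW₀ : atomicType L W₀ = atomicType L v := by
      rw [← atomicType_embedding_comp em v, hv, hδ]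
    obtain ⟨φ, -⟩ := exists_equiv_enumClosure hvW₀
    refine ⟨⟨closure L (Set.range v), ⟨φ⟩⟩, fun x hx => ?_, ?_⟩
    · obtain ⟨i, rfl⟩ := (mem_closure_iff_of_isRelational L _ x).1 hx
      exact ⟨z i, rfl⟩
    · simp only [colour]
      congr 2
      rw [← hv]
      funext i
      exact congrArg em (congrArg Subtype.val (equiv_apply_enumClosure hlin hvW₀ _ i))
  refine ⟨em.comp e, ?_, fun W₁ W₂ h₁ h₂ hδ₁ hδ₂ => ?_⟩
  · rintro _ ⟨x, rfl⟩
    exact ⟨_, rfl⟩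
  · obtain ⟨Q₁, hQ₁, hc₁⟩ := key W₁ h₁ hδ₁
    obtain ⟨Q₂, hQ₂, hc₂⟩ := key W₂ h₂ hδ₂
    exact (Fintype.equivFin κ).injective (hc₁.symm.trans ((he Q₁ Q₂ hQ₁ hQ₂).trans hc₂))

theorem exists_embedding_forall_isMonochromaticOn
    (hlin : IsLinearOrder M fun a b => Structure.RelMap r₀ ![a, b])
    (hram : RamseyClass (L.age M)) {J : Type*} {ι κ : J → Type*} [∀ j, Finite (ι j)]
    [∀ j, Finite (κ j)] (χ : ∀ j, (ι j → M) → κ j) (δ : ∀ j, AtomicType L (ι j))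
    (s : Finset J) {A : L.Substructure M} (hA : A.FG) :
    ∃ θ : A ↪[L] M, ∀ j ∈ s, IsMonochromaticOn (χ j) (δ j) (Set.range θ) := by
  classical
  induction s using Finset.induction_on generalizing A with
  | empty => exact ⟨A.subtype, by simp⟩
  | insert j s _ ih =>
    obtain ⟨B, hB, hAB⟩ :=
      exists_fg_forall_embedding_isMonochromaticOn hlin hram (χ j) (δ j) hA
    obtain ⟨θ', hθ'⟩ := ih hB
    obtain ⟨θ, hθθ', hθ⟩ := hAB θ'
    refine ⟨θ, fun j' hj' => ?_⟩
    rcases Finset.mem_insert.1 hj' with rfl | hj'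
    · exact hθ
    · exact (hθ' j' hj').mono hθθ'

theorem exists_embedding_forall_le_isMonochromaticOn [Finite (Σ n, L.Relations n)]
    (hlin : IsLinearOrder M fun a b => Structure.RelMap r₀ ![a, b])
    (hram : RamseyClass (L.age M)) {τ : Type*} [Finite τ] {κ : ℕ → Type*}
    [∀ d, Finite (κ d)] (χ : ∀ d, (τ ⊕ Fin d → M) → κ d) (D : ℕ) {A : L.Substructure M}
    (hA : A.FG) : ∃ θ : A ↪[L] M, ∀ d ≤ D, ∀ δ : AtomicType L (τ ⊕ Fin d),
      IsMonochromaticOn (χ d) δ (Set.range θ) := by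
  let J := Σ d : Fin (D + 1), AtomicType L (τ ⊕ Fin d)
  have : Fintype J := Fintype.ofFinite J
  obtain ⟨θ, hθ⟩ := exists_embedding_forall_isMonochromaticOn hlin hram
    (fun j : J => χ j.1) (fun j => j.2) Finset.univ hA
  exact ⟨θ, fun d hd δ => hθ ⟨⟨d, Nat.lt_succ_of_le hd⟩, δ⟩ (Finset.mem_univ _)⟩

end Ramsey

section PointedCanonization

open Substructure

variable {L : Language} [L.IsRelational] [Finite (Σ n, L.Relations n)]
  {M : Type} [L.Structure M] {r₀ : L.Relations 2}

theorem exists_equiv_fixing_canonical_on_finset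
    (hlin : IsLinearOrder M fun a b => Structure.RelMap r₀ ![a, b])
    (hhom : L.IsUltrahomogeneous M) (hram : RamseyClass (L.age M)) (g : M → M)
    {τ : Type*} [Finite τ] (c : τ → M) (D : ℕ) (A : Finset M) :
    ∃ β : M ≃[L] M, (∀ i, β (c i) = c i) ∧ ∀ d ≤ D, ∀ u v : Fin d → M,
      (∀ i, u i ∈ A) → (∀ i, v i ∈ A) →
      atomicType L (Sum.elim c u) = atomicType L (Sum.elim c v) →
      atomicType L (g ∘ β ∘ u) = atomicType L (g ∘ β ∘ v) := by
  -- `sel c'` moves a copy `c'` of `c` back onto `c`, so that the colouring below sees a tuple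
  -- of a Ramsey copy as if it were placed over `c` itself.
  obtain ⟨sel, hsel⟩ := exists_forall_equiv_apply_eq_of_atomicType_eq hhom c
  set A' := closure L ((A : Set M) ∪ Set.range c)
  have hA' : A'.FG := fg_closure (A.finite_toSet.union (Set.finite_range c))
  obtain ⟨θ, hθ⟩ := exists_embedding_forall_le_isMonochromaticOn hlin hram
    (fun d (W : τ ⊕ Fin d → M) => atomicType L (g ∘ sel (W ∘ Sum.inl) ∘ W ∘ Sum.inr)) D hA'
  have hcA' : ∀ i, c i ∈ A' := fun i => subset_closure (Or.inr ⟨i, rfl⟩)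
  let cθ : τ → M := fun i => θ ⟨c i, hcA' i⟩
  have hcθ : atomicType L cθ = atomicType L c :=
    (atomicType_embedding_comp θ _).trans
      (atomicType_embedding_comp A'.subtype (fun i => ⟨c i, hcA' i⟩)).symm
  obtain ⟨β, hβ⟩ := hhom A' hA' ((sel cθ).toEmbedding.comp θ)
  have hβA' : ∀ x (hx : x ∈ A'), β x = sel cθ (θ ⟨x, hx⟩) :=
    fun x hx => (DFunLike.congr_fun hβ ⟨x, hx⟩).symm
  have hβc : ∀ i, β (c i) = c i := fun i => (hβA' _ (hcA' i)).trans (hsel cθ hcθ i)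
  have pull : ∀ {d : ℕ} (w : Fin d → M), (∀ i, w i ∈ A) → ∃ W : τ ⊕ Fin d → M,
      Set.range W ⊆ Set.range θ ∧ atomicType L W = atomicType L (Sum.elim c w) ∧
      W ∘ Sum.inl = cθ ∧ sel cθ ∘ W ∘ Sum.inr = β ∘ w := by
    intro d w hw
    have hwA' : ∀ i, w i ∈ A' := fun i => subset_closure (Or.inl (hw i))
    let W : τ ⊕ Fin d → M := Sum.elim cθ fun i => θ ⟨w i, hwA' i⟩
    have hselW : sel cθ ∘ W = β ∘ Sum.elim c w := by
      funext i
      rcases i with i | i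
      · exact (hsel cθ hcθ i).trans (hβc i).symm
      · exact (hβA' _ (hwA' i)).symm
    refine ⟨W, ?_, ?_, rfl, ?_⟩
    · rintro _ ⟨i | i, rfl⟩ <;> exact ⟨_, rfl⟩
    · rw [← atomicType_equiv_comp (sel cθ) W, hselW, atomicType_equiv_comp]
    · exact congrArg (· ∘ Sum.inr) hselW
  refine ⟨β, hβc, fun d hd u v hu hv huv => ?_⟩
  obtain ⟨W₁, hr₁, ht₁, hl₁, hs₁⟩ := pull u hu
  obtain ⟨W₂, hr₂, ht₂, hl₂, hs₂⟩ := pull v hv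
  have := hθ d hd (atomicType L (Sum.elim c u)) W₁ W₂ hr₁ hr₂ ht₁ (ht₂.trans huv.symm)
  simpa only [hl₁, hl₂, hs₁, hs₂] using this

end PointedCanonization

theorem exists_seq_of_step {α : Type*} (P : ℕ → α → Prop) (R : ℕ → α → α → Prop)
    (h0 : ∃ a, P 0 a) (hstep : ∀ n a, P n a → ∃ b, P (n + 1) b ∧ R n a b) :
    ∃ V : ℕ → α, (∀ n, P n (V n)) ∧ ∀ n, R n (V n) (V (n + 1)) := by
  choose next hnextP hnextR using hstep
  let V : ∀ n, {a // P n a} := fun n =>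
    Nat.rec ⟨h0.choose, h0.choose_spec⟩ (fun n a => ⟨next n a.1 a.2, hnextP n a.1 a.2⟩) n
  exact ⟨fun n => (V n).1, fun n => (V n).2, fun n => hnextR n (V n).1 (V n).2⟩

section Compactness

variable {L : Language} [L.IsRelational] {M : Type*} [L.Structure M]

theorem exists_seq_forall_atomicType_eq (hhom : L.IsUltrahomogeneous M)
    (t : ∀ n, AtomicType L (Fin (n + 1)))
    (ht : ∀ n, ∃ φ : ℕ → M, atomicType L (fun j : Fin (n + 1) => φ j) = t n ∧
      atomicType L (fun j : Fin (n + 2) => φ j) = t (n + 1)) :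
    ∃ V : ℕ → M, ∀ n, atomicType L (fun j : Fin (n + 1) => V j) = t n := by
  obtain ⟨Φ, hΦ, hΦΦ⟩ := exists_seq_of_step
    (fun n φ => atomicType L (fun j : Fin (n + 1) => φ j) = t n)
    (fun n φ ψ => ∀ j ≤ n, ψ j = φ j) ((ht 0).imp fun _ h => h.1) fun n φ hφ => by
      obtain ⟨ψ, hψ, hψ'⟩ := ht n
      obtain ⟨γ, hγ⟩ := exists_equiv_apply_eq_of_atomicType_eq hhom (hψ.trans hφ.symm)
      exact ⟨γ ∘ ψ, (atomicType_equiv_comp γ _).trans hψ', fun j hj => hγ ⟨j, by omega⟩⟩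
  have hstable : ∀ j n, j ≤ n → Φ n j = Φ j j := by
    intro j n hjn
    induction n, hjn using Nat.le_induction with
    | base => rfl
    | succ n hjn ih => rw [hΦΦ n j hjn, ih]
  refine ⟨fun j => Φ j j, fun n => ?_⟩
  rw [← hΦ n]
  congr 1
  funext j
  exact (hstable j n (by omega)).symm

theorem exists_frequently_eqOn_equiv_comp [Finite (Σ n, L.Relations n)] [Countable M]
    (hhom : L.IsUltrahomogeneous M) {ι : Type*} (l : Filter ι) [l.NeBot] (h : ι → M → M) :
    ∃ f : M → M, ∀ F : Set M, F.Finite →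
      ∃ᶠ i in l, ∃ γ : M ≃[L] M, Set.EqOn f (γ ∘ h i) F := by
  rcases isEmpty_or_nonempty M with hM | hM
  · exact ⟨id, fun F _ => Filter.Frequently.of_forall fun _ =>
      ⟨Language.Equiv.refl L M, fun x => isEmptyElim x⟩⟩
  obtain ⟨w, hw⟩ := exists_surjective_nat M
  let U := Ultrafilter.of l
  -- the limit along `U` of the atomic types of the initial segments of `h i ∘ w`
  have hlim : ∀ n, ∃ t : AtomicType L (Fin (n + 1)),
      ∀ᶠ i in U, atomicType L (fun j : Fin (n + 1) => h i (w j)) = t := fun n => by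
    obtain ⟨t, ht⟩ :=
      (U.map fun i => atomicType L (fun j : Fin (n + 1) => h i (w j))).eq_pure_of_finite
    exact ⟨t, Ultrafilter.mem_map.1 (ht ▸ Ultrafilter.mem_pure.2 rfl : {t} ∈ U.map _)⟩
  choose t ht using hlim
  obtain ⟨V, hV⟩ := exists_seq_forall_atomicType_eq hhom t fun n => by
    obtain ⟨i, hi, hi'⟩ := ((ht n).and (ht (n + 1))).exists
    exact ⟨fun j => h i (w j), hi, hi'⟩
  refine ⟨fun x => V (Function.surjInv hw x), fun F hF => ?_⟩
  obtain ⟨n, hn⟩ := (hF.image (Function.surjInv hw)).bddAbove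
  refine ((ht n).mono fun i hi => ?_).frequently.filter_mono (Ultrafilter.of_le l)
  obtain ⟨γ, hγ⟩ := exists_equiv_apply_eq_of_atomicType_eq hhom (hi.trans (hV n).symm)
  refine ⟨γ, fun x hx => ?_⟩
  have := hγ ⟨_, Nat.lt_succ_of_le (hn ⟨x, hx, rfl⟩)⟩
  simp only [Function.surjInv_eq hw] at this
  exact this.symm

end Compactness

section Canonical

variable {L : Language} {M : Type*} [L.Structure M]

theorem atomicType_sumElim_eq_of_sameType {s : ℕ} (c : Fin s → M) {n : ℕ} {a b : Fin n → M}
    (h : @SameType (L[[Fin s]]) M (withConstantsStruct L c) n a b) :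
    atomicType L (Sum.elim c a) = atomicType L (Sum.elim c b) := by
  let _ : (L[[Fin s]]).Structure M := withConstantsStruct L c
  -- the entries of `Sum.elim c x` are named by the terms `trm` of the expanded language
  let trm : Fin s ⊕ Fin n → (L[[Fin s]]).Term (Fin n) :=
    Sum.elim (fun j => (L.con j).term) Term.var
  have hreal : ∀ (x : Fin n → M) k, (trm k).realize x = Sum.elim c x k := by
    rintro x (j | i) <;> rfl
  refine atomicType_eq_iff.2 ⟨fun k l => ?_, fun p σ => ?_⟩
  · simpa only [Formula.realize_equal, hreal] using h (Term.equal (trm k) (trm l))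
  · have hσ : ∀ x : Fin n → M, (fun m => (trm (σ m)).realize x) = Sum.elim c x ∘ σ :=
      fun x => funext fun m => hreal x (σ m)
    have := h (Relations.formula (Sum.inl p.2) fun m => trm (σ m))
    erw [Formula.realize_rel, Formula.realize_rel, hσ a, hσ b] at this
    exact this

variable [L.IsRelational]

theorem canonical_of_forall_atomicType_eq (hhom : L.IsUltrahomogeneous M) {s : ℕ}
    (c : Fin s → M) {D : ℕ} (hD : 2 ≤ D) (harity : ∀ n, Nonempty (L.Relations n) → n ≤ D)
    {f : M → M} (hf : ∀ d ≤ D, ∀ u v : Fin d → M,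
      atomicType L (Sum.elim c u) = atomicType L (Sum.elim c v) →
      atomicType L (f ∘ u) = atomicType L (f ∘ v)) :
    @Canonical (L[[Fin s]]) L M M (withConstantsStruct L c) _ f := by
  intro n a b hab
  have hcab := atomicType_sumElim_eq_of_sameType c hab
  refine sameType_of_atomicType_eq hhom
    (atomicType_eq_of_forall_comp hD harity fun d hd σ => hf d hd (a ∘ σ) (b ∘ σ) ?_)
  have hσ : ∀ x : Fin n → M, Sum.elim c (x ∘ σ) = Sum.elim c x ∘ Sum.map id σ := by
    intro x
    funext k
    rcases k with j | i <;> rfl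
  rw [hσ, hσ]
  exact atomicType_comp hcab _

end Canonical

section Canonization

variable {L : Language} [L.IsRelational] [Finite (Σ n, L.Relations n)]
  {M : Type} [L.Structure M] [Countable M] {r₀ : L.Relations 2}

theorem exists_canonical_locally_equiv_comp
    (hlin : IsLinearOrder M fun a b => Structure.RelMap r₀ ![a, b])
    (hhom : L.IsUltrahomogeneous M) (hram : RamseyClass (L.age M)) (g : M → M)
    {s : ℕ} (c : Fin s → M) :
    ∃ f : M → M, (∀ i, f (c i) = g (c i)) ∧
      (∀ F : Set M, F.Finite → ∃ γ β : M ≃[L] M, ∀ x ∈ F, f x = γ (g (β x))) ∧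
      @Canonical (L[[Fin s]]) L M M (withConstantsStruct L c) _ f := by
  obtain ⟨D, hD⟩ := exists_arity_bound (L := L)
  choose β hβc hβ using
    exists_equiv_fixing_canonical_on_finset hlin hhom hram g c (max 2 D)
  obtain ⟨f₀, hf₀⟩ :=
    exists_frequently_eqOn_equiv_comp hhom (Filter.atTop : Filter (Finset M)) fun A => g ∘ β A
  have approx : ∀ F : Set M, F.Finite →
      ∃ (A : Finset M) (γ : M ≃[L] M), F ⊆ A ∧ Set.EqOn f₀ (γ ∘ g ∘ β A) F := by
    intro F hF
    obtain ⟨A, ⟨γ, hγ⟩, hFA⟩ :=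
      ((hf₀ F hF).and_eventually (Filter.eventually_ge_atTop hF.toFinset)).exists
    exact ⟨A, γ, hF.toFinset_subset.1 hFA, hγ⟩
  obtain ⟨A₀, γ₀, -, hc⟩ := approx (Set.range c) (Set.finite_range c)
  refine ⟨γ₀.symm ∘ f₀, fun i => ?_, fun F hF => ?_, ?_⟩
  · simp [hc ⟨i, rfl⟩, hβc]
  · obtain ⟨A, γ, -, hA⟩ := approx F hF
    exact ⟨γ₀.symm.comp γ, β A, fun x hx => by simp [hA hx]⟩
  refine canonical_of_forall_atomicType_eq hhom c (le_max_left 2 D)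
    (fun n hn => (hD n hn).trans (le_max_right 2 D)) fun d hd u v huv => ?_
  obtain ⟨A, γ, hFA, hA⟩ :=
    approx (Set.range u ∪ Set.range v) ((Set.finite_range u).union (Set.finite_range v))
  have hu : γ₀.symm ∘ f₀ ∘ u = (γ₀.symm.comp γ) ∘ g ∘ β A ∘ u :=
    funext fun i => by simp [hA (Or.inl ⟨i, rfl⟩)]
  have hv : γ₀.symm ∘ f₀ ∘ v = (γ₀.symm.comp γ) ∘ g ∘ β A ∘ v :=
    funext fun i => by simp [hA (Or.inr ⟨i, rfl⟩)]
  rw [Function.comp_assoc, hu, Function.comp_assoc, hv, atomicType_equiv_comp,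
    atomicType_equiv_comp]
  exact hβ A d hd u v (fun i => hFA (Or.inl ⟨i, rfl⟩)) (fun i => hFA (Or.inr ⟨i, rfl⟩)) huv

end Canonization

section Monoids

variable {D : Type*}

theorem isClosedTransMonoid_closedMonoidGenBy (A : Set (D → D)) :
    IsClosedTransMonoid (ClosedMonoidGenBy A) := by
  refine ⟨Set.mem_sInter.2 fun S hS => hS.1.1, fun g h hg hh => Set.mem_sInter.2 fun S hS =>
    hS.1.2.1 g h (Set.mem_sInter.1 hg S hS) (Set.mem_sInter.1 hh S hS), fun g hg => ?_⟩
  refine Set.mem_sInter.2 fun S hS => hS.1.2.2 g fun F hF => ?_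
  obtain ⟨h, hh, hhg⟩ := hg F hF
  exact ⟨h, Set.mem_sInter.1 hh S hS, hhg⟩

theorem subset_closedMonoidGenBy (A : Set (D → D)) : A ⊆ ClosedMonoidGenBy A :=
  fun _ hx => Set.mem_sInter.2 fun _ hS => hS.2 hx

theorem closedMonoidGenBy_subset {A N : Set (D → D)} (hN : IsClosedTransMonoid N)
    (hAN : A ⊆ N) : ClosedMonoidGenBy A ⊆ N :=
  fun _ hx => Set.mem_sInter.1 hx N ⟨hN, hAN⟩

theorem MinimalMonoidAbove.eq_closedMonoidGenBy {M₀ N : Set (D → D)}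
    (hmin : MinimalMonoidAbove M₀ N) (hN : IsClosedTransMonoid N) {f : D → D} (hfN : f ∈ N)
    (hf : f ∉ M₀) : N = ClosedMonoidGenBy (M₀ ∪ {f}) :=
  (hmin.2 (ClosedMonoidGenBy (M₀ ∪ {f})) (isClosedTransMonoid_closedMonoidGenBy _)
    ⟨fun _ hg => subset_closedMonoidGenBy _ (Or.inl hg),
      fun h => hf (h (subset_closedMonoidGenBy _ (Or.inr rfl)))⟩
    (closedMonoidGenBy_subset hN (Set.union_subset hmin.1.subset
      (Set.singleton_subset_iff.2 hfN)))).symm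

end Monoids

section Reducts

variable {L L' : Language} {M : Type*} [L.Structure M] [L'.Structure M]

theorem equiv_mem_endSet (hred : IsReduct L L' M) (γ : M ≃[L] M) : ⇑γ ∈ EndSet L' M := by
  intro n r x hx
  obtain ⟨φ, hφ⟩ := hred n r
  rw [hφ] at hx ⊢
  exact (StrongHomClass.realize_formula γ φ).2 hx

theorem mem_of_forall_finite_eq_equiv_comp (hred : IsReduct L L' M) {N : Set (M → M)}
    (hN : IsClosedTransMonoid N) (hEnd : EndSet L' M ⊆ N) {g f : M → M} (hg : g ∈ N)
    (hf : ∀ F : Set M, F.Finite → ∃ γ β : M ≃[L] M, ∀ x ∈ F, f x = γ (g (β x))) : f ∈ N := by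
  refine hN.2.2 f fun F hF => ?_
  obtain ⟨γ, β, hγβ⟩ := hf F hF
  exact ⟨γ ∘ g ∘ β, hN.2.1 _ _ (hEnd (equiv_mem_endSet hred γ))
    (hN.2.1 _ _ hg (hEnd (equiv_mem_endSet hred β))), fun x hx => (hγβ x hx).symm⟩

end Reducts

theorem exists_relMap_of_not_isEndo {L : Language} {M : Type*} [L.Structure M] {g : M → M}
    (hg : ¬IsEndo L M g) : ∃ (m : ℕ) (r : L.Relations m) (x : Fin m → M),
      0 < m ∧ Structure.RelMap r x ∧ ¬Structure.RelMap r fun i => g (x i) := by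
  simp only [IsEndo, not_forall, exists_prop] at hg
  obtain ⟨m, r, x, hx, hgx⟩ := hg
  refine ⟨m, r, x, Nat.pos_of_ne_zero ?_, hx, hgx⟩
  rintro rfl
  exact hgx (by rwa [Subsingleton.elim (fun i => g (x i)) x])

theorem minimal_monoid_generated_by_canonical_function_general
    (L L' : Language) (M : Type) [L.Structure M] [L'.Structure M] [Countable M]
    (hLrel : ∀ i, IsEmpty (L.Functions i)) (hLfin : Finite (Σ i, L.Relations i))
    (hord : Ordered L M) (hhom : L.IsUltrahomogeneous M) (hram : RamseyClass (L.age M))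
    (hred : IsReduct L L' M)
    (nT : ℕ) (hnT : IsGreatest {k : ℕ | Nonempty (L'.Relations k)} nT)
    (N : Set (M → M)) (hclosed : IsClosedTransMonoid N)
    (hmin : MinimalMonoidAbove (EndSet L' M) N) :
    ∃ (c : Fin nT → M) (f : M → M),
      @Canonical (L[[Fin nT]]) L M M (withConstantsStruct L c) _ f ∧
      N = ClosedMonoidGenBy (EndSet L' M ∪ {f}) := by
  have : L.IsRelational := hLrel
  obtain ⟨r₀, hlin⟩ := hord
  obtain ⟨g, hgN, hgE⟩ := Set.exists_of_ssubset hmin.1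
  obtain ⟨m, r, x, hm, hrx, hgx⟩ := exists_relMap_of_not_isEndo hgE
  obtain ⟨c, hcx⟩ : ∃ c : Fin nT → M, ∀ i, c (Fin.castLE (hnT.2 ⟨r⟩) i) = x i :=
    ⟨Function.extend (Fin.castLE _) x fun _ => x ⟨0, hm⟩,
      (Fin.castLE_injective _).extend_apply _ _⟩
  obtain ⟨f, hfc, hfg, hf⟩ := exists_canonical_locally_equiv_comp hlin hhom hram g c
  refine ⟨c, f, hf, hmin.eq_closedMonoidGenBy hclosed
    (mem_of_forall_finite_eq_equiv_comp hred hclosed hmin.1.subset hgN hfg) fun hfE => hgx ?_⟩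
  have hfx : (fun i => f (x i)) = fun i => g (x i) := funext fun i => by rw [← hcx, hfc]
  exact hfx ▸ hfE m r x hrx

/-- **Lemma 8 of the paper.**  Let `Θ` (an `L'`-structure on `M`) with finite relational
signature be a reduct of a countably infinite ordered homogeneous Ramsey structure `Δ`
(an `L`-structure on `M`) with finite relational signature, and let `N` be a closed
transformation monoid minimal above `End(Θ)`.  Then there are constants `c₁, …, c_{n(Θ)}`
(where `n(Θ)` is the maximal arity of the relations of `Θ`) and a function `f` canonical
from `(Δ, c₁, …, c_{n(Θ)})` to `Δ` such that `N` is the smallest closed transformation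
monoid containing `End(Θ)` and `f`. -/
theorem minimal_monoid_generated_by_canonical_function
    (L L' : Language) (M : Type) [L.Structure M] [L'.Structure M] [Countable M] [Infinite M]
    (hLrel : ∀ i, IsEmpty (L.Functions i)) (hLfin : Finite (Σ i, L.Relations i))
    (hTrel : ∀ i, IsEmpty (L'.Functions i)) (hTfin : Finite (Σ i, L'.Relations i))
    (hord : Ordered L M) (hhom : L.IsUltrahomogeneous M) (hram : RamseyClass (L.age M))
    (hred : IsReduct L L' M)
    (nT : ℕ) (hnT : IsGreatest {k : ℕ | Nonempty (L'.Relations k)} nT)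
    (N : Set (M → M)) (hclosed : IsClosedTransMonoid N)
    (hmin : MinimalMonoidAbove (EndSet L' M) N) :
    ∃ (c : Fin nT → M) (f : M → M),
      @Canonical (L[[Fin nT]]) L M M (withConstantsStruct L c) _ f ∧
      N = ClosedMonoidGenBy (EndSet L' M ∪ {f}) :=
  minimal_monoid_generated_by_canonical_function_general L L' M hLrel hLfin hord hhom hram hred nT
    hnT N hclosed hmin

end PaperDef
end

section
/- Let Ξ₁, …, Ξₘ be countably infinite ordered Ramsey structures with relational signatures, let k ≥ 1 and n ≥ 1, let a¹, …, aⁿ be elements of the product Ξ₁×⋯×Ξₘ, and let Fᵢ ⊆ Ξᵢ be finite subsets for 1 ≤ i ≤ m. Then there exist finite subsets Sᵢ ⊆ Ξᵢ such that for every coloring with k colors of the sequences of n elements of S₁×⋯×Sₘ whose type equals the type of (a¹, …, aⁿ), there exist subsets F′ᵢ ⊆ Sᵢ, each F′ᵢ inducing in Ξᵢ a substructure isomorphic to the substructure induced by Fᵢ, such that the coloring is constant on all sequences of n elements of F′₁×⋯×F′ₘ whose type equals the type of (a¹, …, aⁿ). -/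
open FirstOrder FirstOrder.Language

/-!
Ordered structures are rigid: a tuple of the same type as `t` whose entries are entries of `t`
is `t` itself. So in a single factor, colouring the tuples of type `t` is the same as colouring
the copies of the substructure induced by `t`, and the Ramsey property for that substructure
inside the one induced by `F ∪ range t` gives a copy of `F` on which the colouring is constant.

The product is treated one coordinate at a time, the coordinates not yet treated being pinned
to a fixed tuple. To add a coordinate, colour each of its columns by the colouring it induces on
the finitely many tuples over the finite sets already found. This uses finitely many colours, so
the one-factor case makes it constant on a copy of `F`, and the induction hypothesis, applied to
the resulting colouring of the remaining coordinates, finishes the step.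
-/

namespace PaperDef

open Substructure

section LinearOrder

variable {α : Type*} {r : α → α → Prop} [IsLinearOrder α r]

theorem eq_id_of_rel_iff_of_finite [Finite α] {f : α → α} (hf : ∀ x y, r (f x) (f y) ↔ r x y) :
    f = id := by
  let _ : LinearOrder α :=
    { le := r
      le_refl := refl_of r
      le_trans := fun _ _ _ => trans_of r
      le_antisymm := fun _ _ => antisymm_of r
      le_total := total_of r
      toDecidableLE := Classical.decRel r }
  have hinj : f.Injective := fun x y h =>
    antisymm_of r ((hf x y).1 (h ▸ refl_of r _)) ((hf y x).1 (h ▸ refl_of r _))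
  let e : α ≃o α := ⟨.ofBijective f ⟨hinj, Finite.surjective_of_injective hinj⟩, hf _ _⟩
  exact congrArg DFunLike.coe (Subsingleton.elim e (OrderIso.refl α))

theorem eq_of_forall_mem_range_of_rel_iff {n : ℕ} {t u : Fin n → α}
    (hu : ∀ j, u j ∈ Set.range t) (h : ∀ j j', r (u j) (u j') ↔ r (t j) (t j')) : u = t := by
  have : Finite (Set.range t) := (Set.finite_range t).to_subtype
  have : IsLinearOrder _ (Subrel r (· ∈ Set.range t)) := (Subrel.relEmbedding _ _).isLinearOrder
  have hcongr : ∀ j j', t j = t j' → u j = u j' := fun j j' htt =>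
    antisymm_of r ((h j j').2 (htt ▸ refl_of r _)) ((h j' j).2 (htt ▸ refl_of r _))
  let f (x : Set.range t) : Set.range t := ⟨u (Set.rangeSplitting t x), hu _⟩
  have hf : f = id := eq_id_of_rel_iff_of_finite (r := Subrel r _) fun x y => by
    show r (u _) (u _) ↔ r x y
    rw [h, Set.apply_rangeSplitting t x, Set.apply_rangeSplitting t y]
  funext j
  calc u j = u (Set.rangeSplitting t ⟨t j, j, rfl⟩) :=
        hcongr _ _ (Set.apply_rangeSplitting t ⟨t j, j, rfl⟩).symm
    _ = t j := congrArg Subtype.val (congrFun hf ⟨t j, j, rfl⟩)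

end LinearOrder

section SameType

variable {L : Language} {M : Type*} [L.Structure M] {n : ℕ} {t u : Fin n → M}

theorem SameType.apply_eq_apply_iff (h : SameType L M t u) (j j' : Fin n) :
    t j = t j' ↔ u j = u j' := by
  simpa using h ((Term.var j).equal (Term.var j'))

theorem SameType.relMap_comp_iff (h : SameType L M t u) {q : ℕ} (R : L.Relations q)
    (σ : Fin q → Fin n) : Structure.RelMap R (t ∘ σ) ↔ Structure.RelMap R (u ∘ σ) := by
  simpa [Function.comp_def] using h (R.formula fun s => Term.var (σ s))

theorem SameType.eq_of_forall_mem_range (hord : Ordered L M) (h : SameType L M t u)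
    (hu : ∀ j, u j ∈ Set.range t) : u = t := by
  obtain ⟨R, _⟩ := hord
  exact eq_of_forall_mem_range_of_rel_iff (r := fun a b => Structure.RelMap R ![a, b]) hu
    fun j j' => by simpa using (h (R.formula₂ (Term.var j) (Term.var j'))).symm

theorem SameType.epsilon_eq [Nonempty (Fin n → M)] (hord : Ordered L M) (h : SameType L M t u) :
    Classical.epsilon (fun v => (∀ j, v j ∈ Set.range u) ∧ SameType L M t v) = u :=
  have hε := Classical.epsilon_spec (p := fun v => (∀ j, v j ∈ Set.range u) ∧ SameType L M t v)
    ⟨u, fun j => ⟨j, rfl⟩, h⟩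
  SameType.eq_of_forall_mem_range hord (fun φ => (h φ).symm.trans (hε.2 φ)) hε.1

end SameType

theorem setIso_image_image {L : Language} {A X : Type*} [L.Structure A] [L.Structure X]
    (f g : A ↪[L] X) (s : Set A) : SetIso L X (f '' s) (g '' s) := by
  let e₁ := Equiv.Set.image f s f.injective
  refine ⟨e₁.symm.trans (Equiv.Set.image g s g.injective), fun q R x => ?_⟩
  have hx : (fun j => (x j : X)) = f ∘ fun j => (e₁.symm (x j) : A) :=
    funext fun j => congrArg Subtype.val (e₁.apply_symm_apply (x j)).symm
  rw [hx, f.map_rel]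
  exact (g.map_rel R _).symm

section Relational

variable {L : Language} [L.IsRelational] {M N : Type*} [L.Structure M] [L.Structure N] {n : ℕ}

theorem nonempty_equiv_closure_range {t : Fin n → M} {u : Fin n → N}
    (heq : ∀ j j', t j = t j' ↔ u j = u j')
    (hrel : ∀ {q} (R : L.Relations q) (σ : Fin q → Fin n),
      Structure.RelMap R (t ∘ σ) ↔ Structure.RelMap R (u ∘ σ)) :
    Nonempty (closure L (Set.range t) ≃[L] closure L (Set.range u)) := by
  have memt (x : closure L (Set.range t)) : (x : M) ∈ Set.range t :=
    (mem_closure_iff_of_isRelational L _ _).1 x.2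
  have memu (y : closure L (Set.range u)) : (y : N) ∈ Set.range u :=
    (mem_closure_iff_of_isRelational L _ _).1 y.2
  let σ x := (memt x).choose
  let τ y := (memu y).choose
  refine ⟨⟨⟨fun x => ⟨u (σ x), subset_closure ⟨_, rfl⟩⟩,
    fun y => ⟨t (τ y), subset_closure ⟨_, rfl⟩⟩, fun x => Subtype.ext ?_, fun y => Subtype.ext ?_⟩,
    fun f => isEmptyElim f, fun R x => ?_⟩⟩
  · exact ((heq _ _).2 (memu _).choose_spec).trans (memt x).choose_spec
  · exact ((heq _ _).1 (memt _).choose_spec).trans (memu y).choose_spec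
  · have hx : (fun i => (x i : M)) = t ∘ fun i => σ (x i) :=
      funext fun i => ((memt (x i)).choose_spec).symm
    change Structure.RelMap R (u ∘ fun i => σ (x i)) ↔ Structure.RelMap R fun i => (x i : M)
    rw [hx, hrel]

theorem SameType.nonempty_equiv_closure_range {t : Fin n → M} {u : Fin n → N} (f : N ↪[L] M)
    (h : SameType L M t (f ∘ u)) :
    Nonempty (closure L (Set.range t) ≃[L] closure L (Set.range u)) :=
  PaperDef.nonempty_equiv_closure_range
    (fun j j' => (h.apply_eq_apply_iff j j').trans f.injective.eq_iff)
    fun R σ => (h.relMap_comp_iff R σ).trans (f.map_rel R (u ∘ σ))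

end Relational

def TupleRamsey {Y : Type*} (n : ℕ) (Good : Set (Set Y)) (P : (Fin n → Y) → Prop)
    (κ : Type*) : Prop :=
  ∃ S : Set Y, S.Finite ∧ ∀ χ : (Fin n → Y) → κ, ∃ F' ⊆ S, F' ∈ Good ∧
    ∀ u v : Fin n → Y, (∀ j, u j ∈ F') → (∀ j, v j ∈ F') → P u → P v → χ u = χ v

theorem RamseyClass.tupleRamsey {L : Language} [L.IsRelational] {X : Type} [L.Structure X]
    (hord : Ordered L X) (hram : RamseyClass (L.age X)) (κ : Type*) [Finite κ] [Nonempty κ]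
    {F : Set X} (hF : F.Finite) {n : ℕ} (t : Fin n → X) :
    TupleRamsey n {F' | SetIso L X F F'} (SameType L X t) κ := by
  obtain ⟨K, ⟨eκ⟩⟩ := Finite.exists_equiv_fin κ
  let H := closure L (F ∪ Set.range t)
  let P := closure L (Set.range t)
  obtain ⟨S₀, ⟨hS₀, ⟨emb⟩⟩, hS₀χ⟩ := hram K (Fin.pos (eκ (Classical.arbitrary κ)))
    (.of H) (age.fg_substructure (fg_closure (hF.union (Set.finite_range t))))
    (.of P) (age.fg_substructure (fg_closure (Set.finite_range t)))
  have : Finite S₀ := hS₀.finite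
  refine ⟨Set.range emb, Set.finite_range emb, fun χ => ?_⟩
  have : Nonempty (Fin n → X) := ⟨t⟩
  let pick (Q : L.Substructure S₀) : Fin n → X :=
    Classical.epsilon fun v => (∀ j, v j ∈ emb '' Q) ∧ SameType L X t v
  obtain ⟨e, he⟩ := hS₀χ fun Q => eκ (χ (pick Q.1))
  let s : Set H := Subtype.val ⁻¹' F
  have hFs : F = H.subtype '' s := Set.ext fun x =>
    ⟨fun hx => ⟨⟨x, subset_closure (Or.inl hx)⟩, hx, rfl⟩, by rintro ⟨y, hy, rfl⟩; exact hy⟩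
  -- by rigidity, a tuple of type `t` is the one picked from the copy of `P` it spans
  have key : ∀ u, (∀ j, u j ∈ (emb.comp e) '' s) → SameType L X t u →
      ∃ Q : {Q : L.Substructure S₀ // Nonempty (P ≃[L] Q)},
        (Q.1 : Set S₀) ⊆ Set.range e ∧ pick Q.1 = u := by
    intro u hu htu
    choose w _ hw using hu
    replace hw : emb ∘ e ∘ w = u := funext hw
    let Q := closure L (Set.range (e ∘ w))
    have hQ : (Q : Set S₀) = Set.range (e ∘ w) := closure_eq_of_isRelational L _
    refine ⟨⟨Q, SameType.nonempty_equiv_closure_range emb (hw ▸ htu)⟩, hQ ▸ ?_, ?_⟩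
    · exact Set.range_comp_subset_range w e
    · show Classical.epsilon (fun v => (∀ j, v j ∈ emb '' Q) ∧ SameType L X t v) = u
      rw [hQ, ← Set.range_comp, hw]
      exact htu.epsilon_eq hord
  refine ⟨(emb.comp e) '' s, ?_, ?_, fun u v hu hv htu htv => ?_⟩
  · rintro _ ⟨x, -, rfl⟩
    exact ⟨e x, rfl⟩
  · change SetIso L X F _
    rw [hFs]
    exact setIso_image_image _ _ s
  · obtain ⟨Qu, hQu, rfl⟩ := key u hu htu
    obtain ⟨Qv, hQv, rfl⟩ := key v hv htv
    exact eκ.injective (he Qu Qv hQu hQv)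

section Product

variable {ι : Type} {X : ι → Type} {n : ℕ} {Good : ∀ i, Set (Set (X i))}
  {P : ∀ i, (Fin n → X i) → Prop} {κ : Type}

def FitsOn (P : ∀ i, (Fin n → X i) → Prop) (a : Fin n → ∀ i, X i) (s : Finset ι)
    (F' : ∀ i, Set (X i)) (b : Fin n → ∀ i, X i) : Prop :=
  ∀ i, (i ∈ s → (∀ j, b j i ∈ F' i) ∧ P i fun j => b j i) ∧ (i ∉ s → ∀ j, b j i = a j i)

def PinnedProductRamsey (Good : ∀ i, Set (Set (X i))) (P : ∀ i, (Fin n → X i) → Prop)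
    (κ : Type) (a : Fin n → ∀ i, X i) (s : Finset ι) : Prop :=
  ∃ S : ∀ i, Set (X i), (∀ i, (S i).Finite) ∧ ∀ χ : (Fin n → ∀ i, X i) → κ,
    ∃ F' : ∀ i, Set (X i), (∀ i, F' i ⊆ S i) ∧ (∀ i ∈ s, F' i ∈ Good i) ∧
      ∀ b c, FitsOn P a s F' b → FitsOn P a s F' c → χ b = χ c

theorem pinnedProductRamsey_empty (a : Fin n → ∀ i, X i) :
    PinnedProductRamsey Good P κ a ∅ := by
  have hfits {F' b} (hb : FitsOn P a ∅ F' b) : b = a :=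
    funext fun j => funext fun i => (hb i).2 (Finset.notMem_empty i) j
  exact ⟨fun _ => ∅, fun _ => Set.finite_empty, fun _ => ⟨fun _ => ∅, fun _ => subset_rfl,
    by simp, fun b c hb hc => by rw [hfits hb, hfits hc]⟩⟩

theorem FitsOn.update_of_insert [DecidableEq ι] {a : Fin n → ∀ i, X i} {s : Finset ι} {i₀ : ι}
    {F₀ : Set (X i₀)} {F' : ∀ i, Set (X i)} {b : Fin n → ∀ i, X i} (hi₀ : i₀ ∉ s)
    (hb : FitsOn P a (insert i₀ s) (Function.update F' i₀ F₀) b) :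
    FitsOn P a s F' fun j => Function.update (b j) i₀ (a j i₀) := by
  intro i
  rcases eq_or_ne i i₀ with rfl | hi
  · simp [hi₀]
  · simpa [hi] using hb i

theorem pinnedProductRamsey_insert [DecidableEq ι] [Finite ι] [Finite κ] [Nonempty κ]
    {a : Fin n → ∀ i, X i} {s : Finset ι} {i₀ : ι} (hi₀ : i₀ ∉ s)
    (hram : ∀ (κ' : Type) [Finite κ'] [Nonempty κ'], TupleRamsey n (Good i₀) (P i₀) κ')
    (h : PinnedProductRamsey Good P κ a s) : PinnedProductRamsey Good P κ a (insert i₀ s) := by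
  classical
  have : Nonempty (Fin n → X i₀) := ⟨fun j => a j i₀⟩
  obtain ⟨S₁, hS₁, hS₁χ⟩ := h
  let T i := S₁ i ∪ Set.range fun j => a j i
  have (i : ι) : Finite (T i) := ((hS₁ i).union (Set.finite_range _)).to_subtype
  obtain ⟨S₀, hS₀, hS₀χ⟩ := hram ((Fin n → ∀ i, T i) → κ)
  refine ⟨Function.update S₁ i₀ S₀, fun i => ?_, fun χ => ?_⟩
  · rcases eq_or_ne i i₀ with rfl | hi
    · simpa using hS₀
    · simpa [hi] using hS₁ i
  let χ₀ (u : Fin n → X i₀) (v : Fin n → ∀ i, T i) : κ :=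
    χ fun j => Function.update (fun i => (v j i : X i)) i₀ (u j)
  obtain ⟨F₀, hF₀S, hF₀, hF₀χ⟩ := hS₀χ χ₀
  let g := χ₀ (Classical.epsilon fun u => (∀ j, u j ∈ F₀) ∧ P i₀ u)
  let χ₁ (b : Fin n → ∀ i, X i) : κ :=
    if hb : ∀ j i, b j i ∈ T i then g fun j i => ⟨b j i, hb j i⟩ else χ b
  obtain ⟨F₁, hF₁S, hF₁, hF₁χ⟩ := hS₁χ χ₁
  have key (b) (hb : FitsOn P a (insert i₀ s) (Function.update F₁ i₀ F₀) b) :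
      χ b = χ₁ fun j => Function.update (b j) i₀ (a j i₀) := by
    have hpin := hb.update_of_insert hi₀
    have hT (j i) : Function.update (b j) i₀ (a j i₀) i ∈ T i := by
      by_cases his : i ∈ s
      · exact Or.inl (hF₁S i (((hpin i).1 his).1 j))
      · exact Or.inr ⟨j, ((hpin i).2 his j).symm⟩
    have hcol : (∀ j, b j i₀ ∈ F₀) ∧ P i₀ fun j => b j i₀ := by
      simpa using (hb i₀).1 (Finset.mem_insert_self i₀ s)
    have hε := Classical.epsilon_spec (p := fun u => (∀ j, u j ∈ F₀) ∧ P i₀ u) ⟨_, hcol⟩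
    have hg : g = χ₀ fun j => b j i₀ := hF₀χ _ _ hε.1 hcol.1 hε.2 hcol.2
    simp only [χ₁, dif_pos hT, hg, χ₀, Function.update_idem, Function.update_eq_self]
  refine ⟨Function.update F₁ i₀ F₀, fun i => ?_, fun i hi => ?_, fun b c hb hc => ?_⟩
  · rcases eq_or_ne i i₀ with rfl | hi
    · simpa using hF₀S
    · simpa [hi] using hF₁S i
  · rcases eq_or_ne i i₀ with rfl | hi'
    · simpa using hF₀
    · simpa [hi'] using hF₁ i (Finset.mem_of_mem_insert_of_ne hi hi')
  · rw [key b hb, key c hc]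
    exact hF₁χ _ _ (hb.update_of_insert hi₀) (hc.update_of_insert hi₀)

theorem exists_finite_pi_monochromatic [Fintype ι] [Finite κ] [Nonempty κ]
    [Nonempty (Fin n → ∀ i, X i)]
    (hram : ∀ i (κ' : Type) [Finite κ'] [Nonempty κ'], TupleRamsey n (Good i) (P i) κ') :
    ∃ S : ∀ i, Set (X i), (∀ i, (S i).Finite) ∧ ∀ χ : (Fin n → ∀ i, X i) → κ,
      ∃ F' : ∀ i, Set (X i), (∀ i, F' i ⊆ S i) ∧ (∀ i, F' i ∈ Good i) ∧
        ∀ b c : Fin n → ∀ i, X i, (∀ j i, b j i ∈ F' i) → (∀ j i, c j i ∈ F' i) →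
          (∀ i, P i fun j => b j i) → (∀ i, P i fun j => c j i) → χ b = χ c := by
  classical
  obtain ⟨S, hS, hSχ⟩ : PinnedProductRamsey Good P κ (Classical.arbitrary _) Finset.univ :=
    Finset.univ.induction_on (pinnedProductRamsey_empty _)
      fun _ _ hi₀ => pinnedProductRamsey_insert hi₀ (hram _)
  refine ⟨S, hS, fun χ => ?_⟩
  obtain ⟨F', hF'S, hF', hF'χ⟩ := hSχ χ
  have hfits {b} (hb : ∀ j i, b j i ∈ F' i) (hP : ∀ i, P i fun j => b j i) :
      FitsOn P (Classical.arbitrary _) Finset.univ F' b :=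
    fun i => ⟨fun _ => ⟨fun j => hb j i, hP i⟩, fun h => absurd (Finset.mem_univ i) h⟩
  exact ⟨F', hF'S, fun i => hF' i (Finset.mem_univ i),
    fun b c hb hc hPb hPc => hF'χ b c (hfits hb hPb) (hfits hc hPc)⟩

end Product

theorem ordered_Ramsey_product_lemma_general
    (m : ℕ) (Ls : Fin m → Language) (Xs : Fin m → Type)
    [∀ i, (Ls i).Structure (Xs i)]
    (hrel : ∀ (i) (k : ℕ), IsEmpty ((Ls i).Functions k))
    (hord : ∀ i, Ordered (Ls i) (Xs i))
    (hram : ∀ i, RamseyClass ((Ls i).age (Xs i)))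
    (k : ℕ) (hk : 1 ≤ k) (n : ℕ)
    (a : Fin n → ∀ i, Xs i) (F : ∀ i, Set (Xs i)) (hF : ∀ i, (F i).Finite) :
    ∃ S : ∀ i, Set (Xs i), (∀ i, (S i).Finite) ∧
      ∀ χ : (Fin n → ∀ i, Xs i) → Fin k,
        ∃ F' : ∀ i, Set (Xs i),
          (∀ i, F' i ⊆ S i) ∧ (∀ i, SetIso (Ls i) (Xs i) (F i) (F' i)) ∧
          ∀ b c : Fin n → ∀ i, Xs i,
            (∀ j i, b j i ∈ F' i) → (∀ j i, c j i ∈ F' i) →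
            SameSeqType Ls Xs a b → SameSeqType Ls Xs a c → χ b = χ c := by
  have : Nonempty (Fin k) := ⟨⟨0, hk⟩⟩
  have : Nonempty (Fin n → ∀ i, Xs i) := ⟨a⟩
  exact exists_finite_pi_monochromatic fun i κ _ _ =>
    have := hrel i
    (hram i).tupleRamsey (hord i) κ (hF i) fun j => a j i

/-- **Lemma 10 of the paper (the ordered Ramsey product lemma).** -/
theorem ordered_Ramsey_product_lemma
    (m : ℕ) (hm : 1 ≤ m) (Ls : Fin m → Language) (Xs : Fin m → Type)
    [∀ i, (Ls i).Structure (Xs i)]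
    (hcnt : ∀ i, Countable (Xs i)) (hinf : ∀ i, Infinite (Xs i))
    (hrel : ∀ (i) (k : ℕ), IsEmpty ((Ls i).Functions k))
    (hord : ∀ i, Ordered (Ls i) (Xs i))
    (hram : ∀ i, RamseyClass ((Ls i).age (Xs i)))
    (k : ℕ) (hk : 1 ≤ k) (n : ℕ) (hn : 1 ≤ n)
    (a : Fin n → ∀ i, Xs i) (F : ∀ i, Set (Xs i)) (hF : ∀ i, (F i).Finite) :
    ∃ S : ∀ i, Set (Xs i), (∀ i, (S i).Finite) ∧
      ∀ χ : (Fin n → ∀ i, Xs i) → Fin k,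
        ∃ F' : ∀ i, Set (Xs i),
          (∀ i, F' i ⊆ S i) ∧ (∀ i, SetIso (Ls i) (Xs i) (F i) (F' i)) ∧
          ∀ b c : Fin n → ∀ i, Xs i,
            (∀ j i, b j i ∈ F' i) → (∀ j i, c j i ∈ F' i) →
            SameSeqType Ls Xs a b → SameSeqType Ls Xs a c → χ b = χ c :=
  ordered_Ramsey_product_lemma_general m Ls Xs hrel hord hram k hk n a F hF

end PaperDef
end

section
/- Let Θ be a relational structure with domain D, let m ≥ 1, and let R ⊆ Dⁿ be an n-ary relation that intersects precisely m orbits of n-tuples under Aut(Θ). If an operation f : Dᵖ → D violates R, then f generates over Θ an m-ary operation on D that also violates R. -/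
open FirstOrder FirstOrder.Language

namespace PaperDef
/-- **Lemma 12 of the paper (arity reduction).**  If an `n`-ary relation `R` over a relational
structure `Θ` intersects precisely `m` orbits of `n`-tuples and an operation `f` violates `R`,
then `f` generates over `Θ` an `m`-ary operation which also violates `R`. -/
theorem arity_reduction
    (L : Language) (M : Type) [L.Structure M]
    (hrel : ∀ i, IsEmpty (L.Functions i))
    (n m p : ℕ) (R : (Fin n → M) → Prop)
    (rep : Fin m → Fin n → M) (hrepR : ∀ j, R (rep j))
    (hdist : ∀ j j' : Fin m, SameOrbit L M (rep j) (rep j') → j = j')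
    (hcov : ∀ b : Fin n → M, R b → ∃ j, SameOrbit L M (rep j) b)
    (f : (Fin p → M) → M) (hf : ¬ Preserves f R) :
    ∃ g : (Fin m → M) → M, GeneratesOverClone L M f g ∧ ¬ Preserves g R := by
  unfold Preserves at hf
  push_neg at hf
  obtain ⟨rows, hrows, hnot⟩ := hf
  choose σ α hα using fun j => hcov (rows j) (hrows j)
  refine ⟨fun x => f (fun j => α j (x (σ j))), ?_, ?_⟩
  · intro F hF
    exact ⟨_, CloneTerm.baseComp _
      (fun j => CloneTerm.autoComp (α j) (CloneTerm.proj (σ j))), fun x _ => rfl⟩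
  · intro h
    apply hnot
    have := h rep hrepR
    have heq : (fun i => f fun j => α j (rep (σ j) i)) = fun i => f fun j => rows j i := by
      funext i
      congr 1
      funext j
      exact hα j i
    rwa [heq] at this

end PaperDef
end

section
/- Let Θ be a relational structure on a countably infinite domain such that the number o of orbits of pairs of elements under Aut(Θ) is finite. Then every closed clone that is minimal above the smallest closed clone containing End(Θ) is the smallest closed clone containing End(Θ) together with a single operation of arity at most 2·o − 1. -/
open FirstOrder FirstOrder.Language

namespace PaperDef

section AuxProp14

variable {L : Language} {M : Type*} [L.Structure M]

lemma SameOrbit.symm' {n : ℕ} {a b : Fin n → M} (h : SameOrbit L M a b) :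
    SameOrbit L M b a := by
  obtain ⟨α, hα⟩ := h
  exact ⟨α.symm, fun i => by rw [← hα i, α.symm_apply_apply]⟩

lemma SameOrbit.trans' {n : ℕ} {a b c : Fin n → M} (hab : SameOrbit L M a b)
    (hbc : SameOrbit L M b c) : SameOrbit L M a c := by
  obtain ⟨α, hα⟩ := hab
  obtain ⟨β, hβ⟩ := hbc
  exact ⟨β.comp α, fun i => by rw [Equiv.comp_apply, hα, hβ]⟩

lemma isEndo_id : IsEndo L M id := fun _ _ _ h => h

lemma isEndo_comp {e e' : M → M} (he : IsEndo L M e) (he' : IsEndo L M e') :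
    IsEndo L M (e ∘ e') := fun n r x h => he n r _ (he' n r x h)

lemma isEndo_equiv (α : M ≃[L] M) : IsEndo L M (α : M → M) := by
  intro n r x h
  exact (α.map_rel r x).2 h

lemma endoLift_mem_gen {e : M → M} (he : IsEndo L M e) :
    (fun x : Fin 1 → M => e (x 0)) ∈ CloneGenByUnary (EndSet L M) 1 :=
  fun _ _ hC => hC e he

/-- Transfer membership in a clone along a pointwise description. -/
lemma clone_ext {C : ∀ j : ℕ, Set ((Fin j → M) → M)} {k : ℕ}
    {g h : (Fin k → M) → M} (hg : g ∈ C k) (he : ∀ x, h x = g x) : h ∈ C k := by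
  have : g = h := funext fun x => (he x).symm
  exact this ▸ hg

/-- Composition in a closed clone, stated via a pointwise description. -/
lemma clone_comp {C : ∀ j : ℕ, Set ((Fin j → M) → M)} (hC : IsClosedClone C) {k l : ℕ}
    {f' : (Fin l → M) → M} {gs : Fin l → (Fin k → M) → M}
    (hf : f' ∈ C l) (hgs : ∀ j, gs j ∈ C k)
    {h : (Fin k → M) → M} (hh : ∀ x, h x = f' (fun j => gs j x)) : h ∈ C k :=
  clone_ext (hC.2.1 k l f' gs hf hgs) hh

/-- The "locally essentially unary" operations form a closed clone. -/
def LocUnary (L : Language) (M : Type*) [L.Structure M] (n : ℕ) :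
    Set ((Fin n → M) → M) :=
  {g | ∀ F : Set (Fin n → M), F.Finite →
    ∃ (i : Fin n) (e : M → M), IsEndo L M e ∧ ∀ x ∈ F, e (x i) = g x}

lemma locUnary_closed : IsClosedClone (fun n => LocUnary L M n) := by
  refine ⟨?_, ?_, ?_⟩
  · intro k i F _
    exact ⟨i, id, isEndo_id, fun x _ => rfl⟩
  · intro k l f gs hf hgs F hF
    obtain ⟨i0, e0, he0, h0⟩ := hf ((fun x => fun j => gs j x) '' F) (hF.image _)
    obtain ⟨i1, e1, he1, h1⟩ := hgs i0 F hF
    refine ⟨i1, e0 ∘ e1, isEndo_comp he0 he1, fun x hx => ?_⟩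
    have h2 := h0 _ ⟨x, hx, rfl⟩
    have h3 : e1 (x i1) = gs i0 x := h1 x hx
    calc e0 (e1 (x i1)) = e0 (gs i0 x) := by rw [h3]
      _ = f (fun j => gs j x) := h2
  · intro k g hg F hF
    obtain ⟨h, hh, hagree⟩ := hg F hF
    obtain ⟨i, e, he, hi⟩ := hh F hF
    exact ⟨i, e, he, fun x hx => (hi x hx).trans (hagree x hx)⟩

lemma gen_subset_locUnary {n : ℕ} :
    CloneGenByUnary (EndSet L M) n ⊆ LocUnary L M n := fun g hg =>
  hg (fun n => LocUnary L M n) locUnary_closed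
    (fun e he F _ => ⟨0, e, he, fun _ _ => rfl⟩)

lemma gen_interp3 {n : ℕ} {g : (Fin n → M) → M}
    (hg : g ∈ CloneGenByUnary (EndSet L M) n) (p q r : Fin n → M) :
    ∃ (i : Fin n) (e : M → M), IsEndo L M e ∧
      e (p i) = g p ∧ e (q i) = g q ∧ e (r i) = g r := by
  obtain ⟨i, e, he, h⟩ := gen_subset_locUnary hg {p, q, r}
    (((Set.finite_singleton r).insert q).insert p)
  exact ⟨i, e, he, h p (by simp), h q (by simp), h r (by simp)⟩

end AuxProp14


section AuxProp14b

variable {L : Language} {M : Type*} [L.Structure M]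

/-- Substituting (an endomorphic image of) one coordinate for another yields an element
of any closed clone containing `f` and the lift of `e`. -/
lemma minor_mem {C : ∀ j : ℕ, Set ((Fin j → M) → M)} (hC : IsClosedClone C) {K : ℕ}
    {f : (Fin (K + 1) → M) → M} (hf : f ∈ C (K + 1)) (d' : Fin (K + 1)) (rd : Fin K)
    {e : M → M} (he : (fun x : Fin 1 → M => e (x 0)) ∈ C 1) :
    (fun v : Fin K → M => f (d'.insertNth (e (v rd)) v)) ∈ C K := by
  classical
  refine clone_comp hC (gs := fun j (v : Fin K → M) => (d'.insertNth (e (v rd)) v : Fin (K+1) → M) j) hf (fun j => ?_)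
    (fun v => ?_)
  · by_cases hj : j = d'
    · subst hj
      refine clone_comp hC (gs := fun _ => fun v : Fin K → M => v rd) he
        (fun _ => hC.1 K rd) (fun v => ?_)
      simp
    · obtain ⟨u, rfl⟩ := Fin.exists_succAbove_eq hj
      exact clone_ext (hC.1 K u) (fun v => by simp)
  · rfl

/-- If `f` does not depend on coordinate `i`, it is generated by the unary part below. -/
lemma mem_gen_of_inessential {N : ∀ j : ℕ, Set ((Fin j → M) → M)} (hN : IsClosedClone N)
    {K : ℕ} (hK : 1 ≤ K)
    (hsm : ∀ g ∈ N K, g ∈ CloneGenByUnary (EndSet L M) K)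
    {f : (Fin (K + 1) → M) → M} (hfN : f ∈ N (K + 1)) (i : Fin (K + 1))
    (hin : ∀ (x : Fin (K + 1) → M) (w : M), f (Function.update x i w) = f x) :
    f ∈ CloneGenByUnary (EndSet L M) (K + 1) := by
  classical
  set r0 : Fin K := ⟨0, hK⟩ with hr0
  have hid : (fun x : Fin 1 → M => id (x 0)) ∈ N 1 := hN.1 1 0
  have hgN : (fun v : Fin K → M => f (i.insertNth (id (v r0)) v)) ∈ N K :=
    minor_mem hN hfN i r0 hid
  have hgG := hsm _ hgN
  intro C hC hCe
  have hgC := hgG C hC hCe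
  refine clone_comp hC (gs := fun u => fun x : Fin (K + 1) → M => x (i.succAbove u)) hgC
    (fun u => hC.1 (K + 1) (i.succAbove u)) (fun x => ?_)
  show f x = f (i.insertNth (x (i.succAbove r0)) (i.removeNth x))
  rw [Fin.insertNth_removeNth, hin]

end AuxProp14b


section AuxProp14c

variable {L : Language} {M : Type*} [L.Structure M]

/-- Key step: if `f` has a "flip" at coordinate `i` (witnessing that variable `i` is
essential) and the arity is large compared to the number of orbits of pairs, then
changing any other single coordinate of the base tuple does not change the value of `f`. -/
lemma star_step
    {o : ℕ} (ho : 1 ≤ o) {rep : Fin o → Fin 2 → M}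
    (hcov : ∀ b : Fin 2 → M, ∃ j, SameOrbit L M (rep j) b)
    {m0 m1 : M} (hm : m0 ≠ m1)
    {N : ∀ k : ℕ, Set ((Fin k → M) → M)} (hN : IsClosedClone N)
    (hEN : ∀ n, CloneGenByUnary (EndSet L M) n ⊆ N n)
    {K : ℕ} (hko : o + 2 ≤ K + 1)
    {f : (Fin (K + 1) → M) → M} (hfN : f ∈ N (K + 1))
    (hsm : ∀ g ∈ N K, g ∈ CloneGenByUnary (EndSet L M) K)
    (x : Fin (K + 1) → M) (i : Fin (K + 1)) (b : M)
    (hflip : f (Function.update x i b) ≠ f x)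
    (c : Fin (K + 1)) (hci : c ≠ i) (w : M) :
    f (Function.update x c w) = f x := by
  classical
  -- pigeonhole on the non-special coordinates: two of them carry points of the
  -- same orbit
  set O : Finset (Fin (K + 1)) := (Finset.univ.erase i).erase c with hO
  have hOcard : O.card = K - 1 := by
    rw [hO, Finset.card_erase_of_mem
        (Finset.mem_erase.2 ⟨hci, Finset.mem_univ c⟩),
      Finset.card_erase_of_mem (Finset.mem_univ i), Finset.card_univ, Fintype.card_fin]
    omega
  obtain ⟨j2, hj2⟩ := hcov ![m0, m1]
  have φspec : ∀ d : Fin (K + 1), ∃ j, SameOrbit L M (rep j) ![x d, x d] :=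
    fun d => hcov _
  choose φ hφ using φspec
  have hφne : ∀ d, φ d ≠ j2 := by
    intro d h
    have h' := hφ d
    rw [h] at h'
    obtain ⟨α, hα⟩ := (hj2.symm').trans' h'
    have h0 := hα 0
    have h1 := hα 1
    simp only [Matrix.cons_val_zero, Matrix.cons_val_one, Matrix.head_cons] at h0 h1
    exact hm (α.injective (h0.trans h1.symm))
  have hlt : (Finset.univ.erase j2).card < O.card := by
    rw [Finset.card_erase_of_mem (Finset.mem_univ j2), Finset.card_univ,
      Fintype.card_fin, hOcard]
    omega
  obtain ⟨d, hdO, d', hd'O, hdd', hφdd'⟩ :=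
    Finset.exists_ne_map_eq_of_card_lt_of_maps_to hlt
      (fun d _ => Finset.mem_erase.2 ⟨hφne d, Finset.mem_univ (φ d)⟩)
  have hdc : d ≠ c := (Finset.mem_erase.1 hdO).1
  have hdi : d ≠ i := (Finset.mem_erase.1 (Finset.mem_erase.1 hdO).2).1
  have hd'c : d' ≠ c := (Finset.mem_erase.1 hd'O).1
  have hd'i : d' ≠ i := (Finset.mem_erase.1 (Finset.mem_erase.1 hd'O).2).1
  -- the orbit collision
  have h'' := hφ d'
  rw [← hφdd'] at h''
  obtain ⟨α, hα⟩ := ((hφ d).symm').trans' h''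
  have hαd : α (x d) = x d' := by
    have := hα 0
    simpa using this
  -- the minor identifying coordinates d and d'
  obtain ⟨rd, hrd⟩ := Fin.exists_succAbove_eq hdd'
  have hαe : (fun y : Fin 1 → M => (α : M → M) (y 0)) ∈ N 1 :=
    hEN 1 (endoLift_mem_gen (isEndo_equiv α))
  have hminorG := hsm _ (minor_mem hN hfN d' rd hαe)
  -- evaluating the minor on aligned rows recovers `f`
  have hkey : ∀ r : Fin (K + 1) → M, r d = x d → r d' = x d' →
      f (d'.insertNth ((α : M → M) (d'.removeNth r rd)) (d'.removeNth r)) = f r := by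
    intro r h1 h2
    have e2 : (α : M → M) (d'.removeNth r rd) = r d' := by
      show (α : M → M) (r (d'.succAbove rd)) = r d'
      rw [hrd, h1, hαd]
      exact h2.symm
    rw [e2]
    exact congrArg f (Fin.insertNth_self_removeNth d' r)
  obtain ⟨i', e, he, hp, hq, hr⟩ := gen_interp3 hminorG
    (d'.removeNth x) (d'.removeNth (Function.update x i b))
    (d'.removeNth (Function.update x c w))
  have hp' : e (x (d'.succAbove i')) = f x := hp.trans (hkey x rfl rfl)
  have hq' : e (Function.update x i b (d'.succAbove i')) = f (Function.update x i b) :=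
    hq.trans (hkey (Function.update x i b)
      (Function.update_of_ne hdi b x) (Function.update_of_ne hd'i b x))
  have hr' : e (Function.update x c w (d'.succAbove i')) = f (Function.update x c w) :=
    hr.trans (hkey (Function.update x c w)
      (Function.update_of_ne hdc w x) (Function.update_of_ne hd'c w x))
  -- the interpolating coordinate must be `i`
  have hji : d'.succAbove i' = i := by
    by_contra hne
    apply hflip
    calc f (Function.update x i b) = e (Function.update x i b (d'.succAbove i')) := hq'.symm
      _ = e (x (d'.succAbove i')) := by rw [Function.update_of_ne hne b x]
      _ = f x := hp'
  rw [hji] at hp' hr'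
  rw [Function.update_of_ne (Ne.symm hci) w x] at hr'
  exact hr'.symm.trans hp'

end AuxProp14c


section AuxProp14d

variable {L : Language} {M : Type*} [L.Structure M]

/-- The central combinatorial fact: a minimal-arity operation witnessing
`N ≠ ⟨End⟩` has arity at most `o + 1`. -/
lemma key_contradiction
    {o : ℕ} (ho : 1 ≤ o) {rep : Fin o → Fin 2 → M}
    (hcov : ∀ b : Fin 2 → M, ∃ j, SameOrbit L M (rep j) b)
    {m0 m1 : M} (hm : m0 ≠ m1)
    {N : ∀ k : ℕ, Set ((Fin k → M) → M)} (hN : IsClosedClone N)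
    (hEN : ∀ n, CloneGenByUnary (EndSet L M) n ⊆ N n)
    {K : ℕ} (hko : o + 2 ≤ K + 1)
    {f : (Fin (K + 1) → M) → M} (hfN : f ∈ N (K + 1))
    (hfG : f ∉ CloneGenByUnary (EndSet L M) (K + 1))
    (hsm : ∀ g ∈ N K, g ∈ CloneGenByUnary (EndSet L M) K) : False := by
  classical
  have hK1 : 1 ≤ K := by omega
  -- every variable is essential
  have flip_exists : ∀ i : Fin (K + 1), ∃ x b, f (Function.update x i b) ≠ f x := by
    intro i
    by_contra h
    push_neg at h
    exact hfG (mem_gen_of_inessential hN hK1 hsm hfN i h)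
  have star : ∀ (x : Fin (K + 1) → M) (i : Fin (K + 1)) (b : M),
      f (Function.update x i b) ≠ f x →
      ∀ c, c ≠ i → ∀ w, f (Function.update x c w) = f x :=
    fun x i b hflip c hc w => star_step ho hcov hm hN hEN hko hfN hsm x i b hflip c hc w
  -- a flip at `i` forces `f` to be constant on the slice through `x` in direction `i`
  have slice : ∀ (i : Fin (K + 1)) (x : Fin (K + 1) → M) (b : M),
      f (Function.update x i b) ≠ f x → ∀ z, z i = x i → f z = f x := by
    intro i x b hflip z hzi
    suffices h : ∀ S : Finset (Fin (K + 1)), ∀ z : Fin (K + 1) → M,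
        (∀ j, j ∉ S → z j = x j) → z i = x i →
        f z = f x ∧ f (Function.update z i b) = f (Function.update x i b) by
      exact (h Finset.univ z (fun j hj => absurd (Finset.mem_univ j) hj) hzi).1
    intro S
    induction S using Finset.induction_on with
    | empty =>
      intro z hz _
      have hzx : z = x := funext fun j => hz j (Finset.notMem_empty j)
      rw [hzx]
      exact ⟨rfl, rfl⟩
    | @insert c S' hcS' ih =>
      intro z hz hzi
      set z' : Fin (K + 1) → M := Function.update z c (x c) with hz'
      have hz'' : ∀ j, j ∉ S' → z' j = x j := by
        intro j hj
        by_cases hjc : j = c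
        · subst hjc
          rw [hz', Function.update_self]
        · rw [hz', Function.update_of_ne hjc]
          exact hz j (by simp [hjc, hj])
      have hz'i : z' i = x i := by
        by_cases hic : i = c
        · rw [hz', hic, Function.update_self]
        · rw [hz', Function.update_of_ne hic]
          exact hzi
      obtain ⟨h1, h2⟩ := ih z' hz'' hz'i
      by_cases hic : c = i
      · subst hic
        have hzz' : z' = z := by
          rw [hz', ← hzi, Function.update_eq_self]
        rw [← hzz']
        exact ⟨h1, h2⟩
      · -- c ≠ i
        have hflip' : f (Function.update z' i b) ≠ f z' := by
          rw [h1, h2]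
          exact hflip
        have hza : Function.update z' c (z c) = z := by
          funext j
          by_cases hjc : j = c
          · subst hjc
            rw [Function.update_self]
          · rw [Function.update_of_ne hjc, hz', Function.update_of_ne hjc]
        constructor
        · rw [← hza, star z' i b hflip' c hic (z c), h1]
        · have hb : Function.update (Function.update z' i b) i (z' i) = z' := by
            rw [Function.update_idem, Function.update_eq_self]
          have hflip2 : f (Function.update (Function.update z' i b) i (z' i)) ≠
              f (Function.update z' i b) := by
            rw [hb]
            exact hflip'.symm
          have hstar2 := star (Function.update z' i b) i (z' i) hflip2 c hic (z c)
          have hcomm : Function.update (Function.update z' i b) c (z c) =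
              Function.update z i b := by
            funext j
            by_cases hjc : j = c
            · subst hjc
              rw [Function.update_self, Function.update_of_ne hic]
            · rw [Function.update_of_ne hjc]
              by_cases hji : j = i
              · subst hji
                rw [Function.update_self, Function.update_self]
              · rw [Function.update_of_ne hji, Function.update_of_ne hji, hz',
                  Function.update_of_ne hjc]
          rw [← hcomm, hstar2, h2]
  -- two distinct essential coordinates yield a contradiction
  have hK2 : 2 ≤ K := by omega
  set i0 : Fin (K + 1) := ⟨0, by omega⟩ with hi0
  set i1 : Fin (K + 1) := ⟨1, by omega⟩ with hi1
  have h01 : i0 ≠ i1 := by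
    rw [hi0, hi1]
    intro h
    simpa using congrArg Fin.val h
  obtain ⟨x, b, hx⟩ := flip_exists i0
  obtain ⟨s, b', hs⟩ := flip_exists i1
  have h1 : f (Function.update x i1 (s i1)) = f x :=
    slice i0 x b hx _ (Function.update_of_ne h01 (s i1) x)
  have h2 : f (Function.update x i1 (s i1)) = f s :=
    slice i1 s b' hs _ (Function.update_self i1 (s i1) x)
  have h3 : f (Function.update x i1 b') = f x :=
    slice i0 x b hx _ (Function.update_of_ne h01 b' x)
  have hb : Function.update (Function.update s i1 b') i1 (s i1) = s := by
    rw [Function.update_idem, Function.update_eq_self]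
  have hflip4 : f (Function.update (Function.update s i1 b') i1 (s i1)) ≠
      f (Function.update s i1 b') := by
    rw [hb]
    exact hs.symm
  have h4 : f (Function.update x i1 b') = f (Function.update s i1 b') := by
    refine slice i1 (Function.update s i1 b') (s i1) hflip4 _ ?_
    rw [Function.update_self, Function.update_self]
  exact hs ((h4.symm.trans h3).trans ((h2.symm.trans h1)).symm)

end AuxProp14d


section AuxProp14e

variable {L : Language} {M : Type*} [L.Structure M]

lemma cloneGenByUnaryAnd_closed (S : Set (M → M)) {p : ℕ} (f : (Fin p → M) → M) :
    IsClosedClone (CloneGenByUnaryAnd S f) := by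
  refine ⟨fun k i C hC hCe hCf => hC.1 k i,
    fun k l f' gs hf' hgs C hC hCe hCf =>
      hC.2.1 k l f' gs (hf' C hC hCe hCf) (fun j => hgs j C hC hCe hCf),
    fun k g hg C hC hCe hCf => hC.2.2 k g (fun F hF => ?_)⟩
  obtain ⟨h, hh, ha⟩ := hg F hF
  exact ⟨h, hh C hC hCe hCf, ha⟩

end AuxProp14e


/-- **Proposition 14 of the paper.**  Let `Θ` be a relational structure on a countably infinite
domain such that the number `o` of orbits of pairs under `Aut(Θ)` is finite.  Then every
closed clone minimal above the smallest closed clone containing `End(Θ)` is the smallest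
closed clone containing `End(Θ)` together with a single operation of arity at most
`2 * o - 1`. -/
theorem minimal_clones_above_endomorphisms_have_bounded_arity
    (L : Language) (M : Type) [L.Structure M] [Countable M] [Infinite M]
    (hrel : ∀ i, IsEmpty (L.Functions i))
    (o : ℕ) (rep : Fin o → Fin 2 → M)
    (hdist : ∀ j j' : Fin o, SameOrbit L M (rep j) (rep j') → j = j')
    (hcov : ∀ b : Fin 2 → M, ∃ j, SameOrbit L M (rep j) b)
    (N : ∀ k : ℕ, Set ((Fin k → M) → M)) (hN : IsClosedClone N)
    (hmin : MinimalCloneAbove (CloneGenByUnary (EndSet L M)) N) :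
    ∃ (p : ℕ), p ≤ 2 * o - 1 ∧ ∃ f : (Fin p → M) → M,
      N = CloneGenByUnaryAnd (EndSet L M) f := by
  classical
  obtain ⟨⟨hle, hne⟩, hminimal⟩ := hmin
  -- `o ≥ 2`
  obtain ⟨m0, m1, hm⟩ := exists_pair_ne M
  obtain ⟨j1, hj1⟩ := hcov ![m0, m0]
  obtain ⟨j2, hj2⟩ := hcov ![m0, m1]
  have hj12 : j1 ≠ j2 := by
    intro h
    rw [h] at hj1
    obtain ⟨α, hα⟩ := (hj1.symm').trans' hj2
    have h0 := hα 0
    have h1 := hα 1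
    simp only [Matrix.cons_val_zero, Matrix.cons_val_one, Matrix.head_cons] at h0 h1
    exact hm (h0.symm.trans h1)
  have ho2 : 2 ≤ o := by
    by_contra h
    push_neg at h
    have hv1 : (j1 : ℕ) < o := j1.isLt
    have hv2 : (j2 : ℕ) < o := j2.isLt
    exact hj12 (Fin.ext (by omega))
  -- minimal arity at which `N` exceeds the clone generated by the endomorphisms
  have hexists : ∃ n, ∃ g, g ∈ N n ∧ g ∉ CloneGenByUnary (EndSet L M) n := by
    by_contra h
    push_neg at h
    apply hne
    funext n
    exact Set.Subset.antisymm (hle n) (fun g hg => h n g hg)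
  obtain ⟨k, ⟨f, hfN, hfG⟩, hkmin⟩ :
      ∃ k, (∃ g, g ∈ N k ∧ g ∉ CloneGenByUnary (EndSet L M) k) ∧
        ∀ m, m < k → ¬∃ g, g ∈ N m ∧ g ∉ CloneGenByUnary (EndSet L M) m :=
    ⟨Nat.find hexists, Nat.find_spec hexists, fun m hm' => Nat.find_min hexists hm'⟩
  -- the arity bound
  have hk_le : k ≤ o + 1 := by
    by_contra hgt
    push_neg at hgt
    obtain ⟨K, rfl⟩ : ∃ K, k = K + 1 := ⟨k - 1, by omega⟩
    have hsm : ∀ g ∈ N K, g ∈ CloneGenByUnary (EndSet L M) K := by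
      intro g hg
      by_contra hgG
      exact hkmin K (by omega) ⟨g, hg, hgG⟩
    exact key_contradiction (by omega) hcov hm hN hle (by omega) hfN hfG hsm
  refine ⟨k, by omega, f, ?_⟩
  -- `N` is generated by the endomorphisms together with `f`
  have hfE : f ∈ CloneGenByUnaryAnd (EndSet L M) f k := fun C _ _ hCf => hCf
  have hCle : CloneLE (CloneGenByUnary (EndSet L M)) (CloneGenByUnaryAnd (EndSet L M) f) :=
    fun n g hg C hC hCe _ => hg C hC hCe
  have hCne : CloneGenByUnary (EndSet L M) ≠ CloneGenByUnaryAnd (EndSet L M) f := by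
    intro h
    rw [h] at hfG
    exact hfG hfE
  have hEleN : CloneLE (CloneGenByUnaryAnd (EndSet L M) f) N := by
    intro n g hg
    exact hg N hN (fun e he => hle 1 (endoLift_mem_gen he)) hfN
  exact (hminimal _ (cloneGenByUnaryAnd_closed (EndSet L M) f) ⟨hCle, hCne⟩ hEleN).symm

end PaperDef
end

section
/- Let D be a set, let m ≥ 1, and let f : Dᵐ → D be an operation that preserves the ternary relation P₃ = {(x,y,z) ∈ D³ : x = y or y = z}. Then f is essentially unary. Equivalently, every essential operation on D violates P₃. -/
namespace PaperDef

/-- **Observation in the proof of Proposition 14.**  An operation preserving the ternary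
relation `P₃ = {(x,y,z) : x = y ∨ y = z}` is essentially unary; equivalently, every essential
operation violates `P₃`. -/
theorem preserves_P3_implies_essentially_unary
    (D : Type*) (m : ℕ) (hm : 1 ≤ m) (f : (Fin m → D) → D)
    (hf : Preserves f (fun x : Fin 3 → D => x 0 = x 1 ∨ x 1 = x 2)) :
    ∃ (i : Fin m) (F : D → D), ∀ x : Fin m → D, f x = F (x i) := by
  -- the basic consequence of preservation
  have triple : ∀ u v w : Fin m → D, (∀ j, u j = v j ∨ v j = w j) →
      f u = f v ∨ f v = f w := by
    intro u v w h
    have := hf (fun j => ![u j, v j, w j]) (by intro j; simpa using h j)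
    simpa using this
  by_cases hc : ∀ x y : Fin m → D, f x = f y
  · exact ⟨⟨0, hm⟩, fun c => f (fun _ => c), fun x => hc x _⟩
  push_neg at hc
  obtain ⟨x, y, hxy⟩ := hc
  -- a path from x to y changing one coordinate at a time
  set z : ℕ → Fin m → D := fun k j => if (j : ℕ) < k then y j else x j with hz
  have h0 : z 0 = x := funext fun j => if_neg (Nat.not_lt_zero _)
  have hmz : z m = y := funext fun j => if_pos j.isLt
  have step : ∃ k, k < m ∧ f (z k) ≠ f (z (k + 1)) := by
    by_contra h
    push_neg at h
    have key : ∀ k, k ≤ m → f (z k) = f x := by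
      intro k
      induction k with
      | zero => intro _; rw [h0]
      | succ n ih =>
          intro hk
          rw [← h n (Nat.lt_of_succ_le hk)]
          exact ih (le_of_lt (Nat.lt_of_succ_le hk))
    have := key m le_rfl
    rw [hmz] at this
    exact hxy this.symm
  obtain ⟨k, hk, hne⟩ := step
  set i : Fin m := ⟨k, hk⟩ with hi
  have hdiff : ∀ j : Fin m, j ≠ i → z k j = z (k + 1) j := by
    intro j hj
    have hjk : (j : ℕ) ≠ k := fun h => hj (Fin.ext h)
    have : (j : ℕ) < k ↔ (j : ℕ) < k + 1 :=
      ⟨fun h => h.trans (Nat.lt_succ_self _),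
       fun h => lt_of_le_of_ne (Nat.lt_succ_iff.mp h) hjk⟩
    simp only [hz]
    rw [if_congr this rfl rfl]
  -- f w = f (z k) whenever w i = z k i
  have claim1 : ∀ w : Fin m → D, w i = z k i → f w = f (z k) := by
    intro w hw
    have := triple (z (k + 1)) (z k) w (fun j => by
      by_cases hj : j = i
      · exact Or.inr (hj ▸ hw.symm)
      · exact Or.inl (hdiff j hj).symm)
    rcases this with h | h
    · exact absurd h.symm hne
    · exact h.symm
  -- f w = f (z (k+1)) whenever w i = z (k+1) i
  have claim2 : ∀ w : Fin m → D, w i = z (k + 1) i → f w = f (z (k + 1)) := by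
    intro w hw
    have := triple (z k) (z (k + 1)) w (fun j => by
      by_cases hj : j = i
      · exact Or.inr (hj ▸ hw.symm)
      · exact Or.inl (hdiff j hj))
    rcases this with h | h
    · exact absurd h hne
    · exact h.symm
  -- f depends only on coordinate i
  have key : ∀ u v : Fin m → D, u i = v i → f u = f v := by
    intro u v huv
    by_contra hne2
    have t1 : f u = f (z k) := by
      have := triple (Function.update u i (z k i)) u v (fun j => by
        by_cases hj : j = i
        · exact Or.inr (hj ▸ huv)
        · exact Or.inl (Function.update_of_ne hj _ _))
      rcases this with h | h
      · rw [← h]; exact claim1 _ (by simp)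
      · exact absurd h hne2
    have t2 : f u = f (z (k + 1)) := by
      have := triple (Function.update u i (z (k + 1) i)) u v (fun j => by
        by_cases hj : j = i
        · exact Or.inr (hj ▸ huv)
        · exact Or.inl (Function.update_of_ne hj _ _))
      rcases this with h | h
      · rw [← h]; exact claim2 _ (by simp)
      · exact absurd h hne2
    exact hne (t1 ▸ t2)
  exact ⟨i, fun c => f (Function.update (z k) i c),
    fun u => key u (Function.update (z k) i (u i)) (by simp)⟩

end PaperDef
end
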